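/- arXiv:2003.09095 — 6 statements merged into one kernel-verified Lean document; each statement's English description precedes it below -/
import Mathlib

section
/- Let n ≥ 3 and let s : ℕ → F₂ be a sequence. Then s satisfies the recursion s_{i+n} = s_i + s_{i+1} + s_{i+n-1} for all i ≥ 0 if and only if either s_{i+n-1} = s_i for all i ≥ 0, or s_{i+n-1} = s_i + 1 for all i ≥ 0. (Equivalently: every cycle of the pure run-length register of order n is either a cycle of the pure cycling register of order n−1 or a cycle of the complemented cycling register of order n−1.) -/
attribute [local instance] Classical.propDecidable

abbrev F2 := ZMod 2

/-- Coordinate access with default value `0` outside the range. -/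
noncomputable def get {n : ℕ} (c : Fin n → F2) (j : ℕ) : F2 :=
  if h : j < n then c ⟨j, h⟩ else 0

/-- Lexicographic order on binary tuples (coordinates compared from index 0, with 0 < 1). -/
def lexLe {m : ℕ} (v w : Fin m → F2) : Prop :=
  ∀ j : Fin m, (∀ i : Fin m, i < j → v i = w i) → (v j).val ≤ (w j).val

def lexLt {m : ℕ} (v w : Fin m → F2) : Prop := lexLe v w ∧ v ≠ w

/-- Left cyclic rotation by `r`. -/
def rot {m : ℕ} (r : ℕ) (w : Fin m → F2) : Fin m → F2 :=
  fun i => w ⟨((i : ℕ) + r) % m, Nat.mod_lt _ i.pos⟩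

/-- `w` is lexicographically minimal among its cyclic rotations. -/
def IsNecklace {m : ℕ} (w : Fin m → F2) : Prop := ∀ r : ℕ, lexLe w (rot r w)

/-- `w` followed by its coordinatewise complement. -/
def complAppend {m : ℕ} (w : Fin m → F2) : Fin (2 * m) → F2 :=
  fun i => if h : (i : ℕ) < m then w ⟨(i : ℕ), h⟩
           else w ⟨(i : ℕ) - m, by have := i.isLt; omega⟩ + 1

def IsCoNecklace {m : ℕ} (w : Fin m → F2) : Prop := IsNecklace (complAppend w)

/-- The last `n-1` coordinates of an `n`-stage state. -/
def stTail {n : ℕ} (c : Fin n → F2) : Fin (n - 1) → F2 :=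
  fun i => c ⟨(i : ℕ) + 1, by have := i.isLt; omega⟩

/-- The state map of a successor rule/feedback function:
`(c_0,…,c_{n-1}) ↦ (c_1,…,c_{n-1}, ρ(c))`. -/
def nextMap {n : ℕ} (ρ : (Fin n → F2) → F2) (c : Fin n → F2) : Fin n → F2 :=
  fun i => if h : (i : ℕ) + 1 < n then c ⟨(i : ℕ) + 1, h⟩ else ρ c

/-- Feedback of the pure run-length register: `c_0 + c_1 + c_{n-1}`. -/
noncomputable def fPRR {n : ℕ} (c : Fin n → F2) : F2 :=
  get c 0 + get c 1 + get c (n - 1)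

/-- The successor rule `ρ` generates a de Bruijn sequence of order `n`,
i.e. all `2^n` states lie in a single orbit of its state map. -/
def generatesDB {n : ℕ} (ρ : (Fin n → F2) → F2) : Prop :=
  ∀ x y : Fin n → F2, ∃ k : ℕ, (nextMap ρ)^[k] x = y

def inOrbit {α : Type*} (σ : α → α) (v w : α) : Prop := ∃ k : ℕ, σ^[k] v = w

def orbit {α : Type*} (σ : α → α) (v : α) : Set α := {w | inOrbit σ v w}

/-- `v` is the cycle representative (the lexicographically least state) of its orbit. -/
def isCycleRep {m : ℕ} (σ : (Fin m → F2) → (Fin m → F2)) (v : Fin m → F2) : Prop :=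
  ∀ w ∈ orbit σ v, lexLe v w

/-- Hamming weight. -/
noncomputable def wt {m : ℕ} (u : Fin m → F2) : ℕ :=
  (Finset.univ.filter (fun j : Fin m => u j = 1)).card

/-- The operator `Λ`: cyclically shift a nonzero tuple so that its first `1`
moves to the end (identity on the zero tuple). -/
noncomputable def Lam {m : ℕ} (u : Fin m → F2) : Fin m → F2 :=
  if h : (Finset.univ.filter (fun j : Fin m => u j = 1)).Nonempty then
    rot (((Finset.univ.filter (fun j : Fin m => u j = 1)).min' h).val + 1) u
  else u

/-- The operator `Θ`: if `j ≥ 1` is the least index (0-based) with `u j = 0`,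
rotate left by `j`; fixes tuples with no such index. -/
noncomputable def Theta {m : ℕ} (u : Fin m → F2) : Fin m → F2 :=
  if h : (Finset.univ.filter (fun j : Fin m => 0 < (j : ℕ) ∧ u j = 0)).Nonempty then
    rot ((Finset.univ.filter (fun j : Fin m => 0 < (j : ℕ) ∧ u j = 0)).min' h).val u
  else u

/-- Conjugate state: first bit complemented. -/
def conjSt {n : ℕ} (v : Fin n → F2) : Fin n → F2 :=
  fun i => if (i : ℕ) = 0 then v i + 1 else v i

/-- Companion state: last bit complemented. -/
def compSt {n : ℕ} (v : Fin n → F2) : Fin n → F2 :=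
  fun i => if (i : ℕ) + 1 = n then v i + 1 else v i

/-- `(c_1,…,c_{n-1}, b)`. -/
def shiftIn {n : ℕ} (c : Fin n → F2) (b : F2) : Fin n → F2 :=
  fun i => if h : (i : ℕ) + 1 < n then c ⟨(i : ℕ) + 1, h⟩ else b

/-- `lcm(1,2,…,m)`. -/
def lcmUpTo (m : ℕ) : ℕ := (Finset.Icc 1 m).lcm id

/-- Admissible parameters `1 = k_1 < k_2 < … < k_t = n`, `k_{t-1} < n-1`, `2 ≤ t ≤ n-1`,
for the rules `Ψ₁` and `Υ₁` (the values `k 1, …, k t` of `k : ℕ → ℕ`). -/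
def validParams (n t : ℕ) (k : ℕ → ℕ) : Prop :=
  2 ≤ t ∧ t ≤ n - 1 ∧ k 1 = 1 ∧ k t = n ∧
  (∀ i : ℕ, 1 ≤ i → i < t → k i < k (i + 1)) ∧ k (t - 1) < n - 1

/-- The successor rule `Ψ₁` of Theorem 3.2. -/
noncomputable def Psi1Rule {n : ℕ} (t : ℕ) (k : ℕ → ℕ) (c : Fin n → F2) : F2 :=
  if (get c 1 = 0 ∧ IsCoNecklace (stTail c)) ∨
     (get c 1 = 1 ∧ ∃ i : ℕ, 1 ≤ i ∧ i < t ∧ k i ≤ wt (stTail c) ∧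
        wt (stTail c) < k (i + 1) ∧ IsNecklace (Lam^[k i] (stTail c)))
  then fPRR c + 1 else fPRR c

/-- The successor rule `Ψ₂` of Theorem 3.4. -/
noncomputable def Psi2Rule {n : ℕ} (k : ℕ) (c : Fin n → F2) : F2 :=
  if (get c 1 = 0 ∧ IsCoNecklace (stTail c)) ∨
     (get c 1 = 1 ∧ IsNecklace (Lam^[k] (stTail c)))
  then fPRR c + 1 else fPRR c

/-- `y_c = (c̄_1,…,c̄_{n-2}, 0) ∈ F₂^{n-1}`. -/
noncomputable def yState {n : ℕ} (c : Fin n → F2) : Fin (n - 1) → F2 :=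
  fun i => if (i : ℕ) < n - 2 then get c ((i : ℕ) + 1) + 1 else 0

/-- `w_c = (0, c_1,…,c_{n-2}) ∈ F₂^{n-1}`. -/
noncomputable def wState {n : ℕ} (c : Fin n → F2) : Fin (n - 1) → F2 :=
  fun i => if (i : ℕ) = 0 then 0 else get c (i : ℕ)

/-- The successor rule `Υ₁` of Theorem 4.2. -/
noncomputable def Ups1Rule {n : ℕ} (t : ℕ) (k : ℕ → ℕ) (c : Fin n → F2) : F2 :=
  if (get c (n - 1) = 1 ∧ IsCoNecklace (yState c)) ∨
     (get c (n - 1) = 0 ∧ ∃ i : ℕ, 1 ≤ i ∧ i < t ∧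
        k i ≤ wt (fun j => wState c j + 1) ∧ wt (fun j => wState c j + 1) < k (i + 1) ∧
        IsNecklace (Theta^[k i - 1] (wState c)))
  then fPRR c + 1 else fPRR c

/-- The successor rule `Υ₂` of Theorem 4.3. -/
noncomputable def Ups2Rule {n : ℕ} (k : ℕ) (c : Fin n → F2) : F2 :=
  if (get c (n - 1) = 1 ∧ IsCoNecklace (yState c)) ∨
     (get c (n - 1) = 0 ∧ IsNecklace (Theta^[k] (wState c)))
  then fPRR c + 1 else fPRR c

/-- `x_c` of Theorem 4.1: `(0,c_1,…,c_{n-1})` if `c_{n-1}=0`,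
and `(c̄_1,…,c̄_{n-2},0,c_1)` if `c_{n-1}=1`. -/
noncomputable def xState {n : ℕ} (c : Fin n → F2) : Fin n → F2 :=
  if get c (n - 1) = 0 then (fun i => if (i : ℕ) = 0 then 0 else c i)
  else fun i => if (i : ℕ) < n - 2 then get c ((i : ℕ) + 1) + 1
       else if (i : ℕ) = n - 2 then 0 else get c 1

/-- a sequence satisfies the PRR recursion of order `n` iff it satisfies
either the PCR recursion or the CCR recursion of order `n-1`. -/
theorem prr_cycles_are_pcr_or_ccr (n : ℕ) (hn : 3 ≤ n) (s : ℕ → F2) :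
    (∀ i : ℕ, s (i + n) = s i + s (i + 1) + s (i + n - 1)) ↔
      ((∀ i : ℕ, s (i + n - 1) = s i) ∨ (∀ i : ℕ, s (i + n - 1) = s i + 1)) := by
  have aux1 : ∀ a b : F2, a + b = 0 → a = b := by decide
  have aux2 : ∀ a b : F2, a + b = 1 → a = b + 1 := by decide
  have aux3 : ∀ a b c : F2, (a + b + c) + b = c + a := by decide
  constructor
  · intro h
    have key : ∀ i, s (i + n - 1) + s i = s (n - 1) + s 0 := by
      intro i
      induction i with
      | zero => simp
      | succ i ih =>
        have h' := h i
        have e1 : i + 1 + n - 1 = i + n := by omega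
        rw [e1, h', ← ih]
        exact aux3 _ _ _
    rcases (by decide : ∀ x : F2, x = 0 ∨ x = 1) (s (n - 1) + s 0) with h0 | h1
    · left; intro i; exact aux1 _ _ (by rw [key i, h0])
    · right; intro i; exact aux2 _ _ (by rw [key i, h1])
  · have aux4 : ∀ a b : F2, b = a + b + a := by decide
    have aux5 : ∀ a b : F2, b + 1 = a + b + (a + 1) := by decide
    rintro (hp | hp) <;> intro i <;>
    [ (have h1 := hp i
       have h2 := hp (i + 1)
       have e : i + 1 + n - 1 = i + n := by omega
       rw [e] at h2
       rw [h1, h2]; exact aux4 _ _);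
      (have h1 := hp i
       have h2 := hp (i + 1)
       have e : i + 1 + n - 1 = i + n := by omega
       rw [e] at h2
       rw [h1, h2]; exact aux5 _ _)]
end

section
/- Let n ≥ 3 and let s : ℕ → F₂ satisfy s_{i+n} = s_i + s_{i+1} + s_{i+n-1} for all i ≥ 0. Then for every i ≥ 0, the run-length of the n-tuple (s_i, s_{i+1}, …, s_{i+n-1}) equals the run-length of (s_0, s_1, …, s_{n-1}). In other words, all states occurring in a cycle of the pure run-length register of order n have the same run-length. -/
attribute [local instance] Classical.propDecidable

/-- Run-length of the window `(s_i, …, s_{i+n-1})`: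
`1 +` the number of `j ∈ {0,…,n-2}` with `s_{i+j} ≠ s_{i+j+1}`. -/
noncomputable def runLen (n : ℕ) (s : ℕ → F2) (i : ℕ) : ℕ :=
  1 + ((Finset.range (n - 1)).filter (fun j => s (i + j) ≠ s (i + j + 1))).card

/-- all states occurring in a cycle of the PRR of order `n`
have the same run-length. -/
theorem prr_constant_run_length (n : ℕ) (hn : 3 ≤ n) (s : ℕ → F2)
    (hs : ∀ i : ℕ, s (i + n) = s i + s (i + 1) + s (i + n - 1)) :
    ∀ i : ℕ, runLen n s i = runLen n s 0 := by
  have key : ∀ i : ℕ, (s (i + (n-1)) ≠ s (i + (n-1) + 1)) ↔ (s i ≠ s (i+1)) := by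
    intro i
    have h := hs i
    have h1 : i + n - 1 = i + (n-1) := by omega
    have h2 : i + (n-1) + 1 = i + n := by omega
    rw [h1] at h
    rw [h2, h]
    have : ∀ a b c : ZMod 2, (c ≠ a + b + c ↔ a ≠ b) := by decide
    exact this _ _ _
  have hA : ∀ m : ℕ, ((Finset.range (n-1)).filter (fun j => s (m+j) ≠ s (m+j+1))).card
      = ((Finset.Ico m (m+(n-1))).filter (fun k => s k ≠ s (k+1))).card := by
    intro m
    apply Finset.card_bij (fun j _ => m + j)
    · intro j hj
      simp only [Finset.mem_filter, Finset.mem_range] at hj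
      simp only [Finset.mem_filter, Finset.mem_Ico]
      exact ⟨⟨by omega, by omega⟩, hj.2⟩
    · intro a ha b hb hab; omega
    · intro k hk
      simp only [Finset.mem_filter, Finset.mem_Ico] at hk
      refine ⟨k - m, ?_, by omega⟩
      simp only [Finset.mem_filter, Finset.mem_range]
      have hkm : m + (k - m) = k := by omega
      rw [hkm]
      exact ⟨by omega, hk.2⟩
  have step : ∀ i : ℕ, runLen n s (i+1) = runLen n s i := by
    intro i
    unfold runLen
    congr 1
    rw [hA (i+1), hA i]
    set M := i + (n-1) with hM
    have e2 : i + 1 + (n - 1) = M + 1 := by omega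
    rw [e2]
    have hs1 : Finset.Ico (i+1) (M+1) = insert M (Finset.Ico (i+1) M) := by
      ext x; simp only [Finset.mem_Ico, Finset.mem_insert]; omega
    have hs2 : Finset.Ico i M = insert i (Finset.Ico (i+1) M) := by
      ext x; simp only [Finset.mem_Ico, Finset.mem_insert]; omega
    rw [hs1, hs2, Finset.filter_insert, Finset.filter_insert]
    have hiff := key i
    have hMnot : M ∉ (Finset.Ico (i+1) M).filter (fun k => s k ≠ s (k+1)) := by
      simp [Finset.mem_filter, Finset.mem_Ico]
    have hinot : i ∉ (Finset.Ico (i+1) M).filter (fun k => s k ≠ s (k+1)) := by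
      simp [Finset.mem_filter, Finset.mem_Ico]
    by_cases hp : s i ≠ s (i+1)
    · rw [if_pos (hiff.mpr hp), if_pos hp,
        Finset.card_insert_of_notMem hMnot, Finset.card_insert_of_notMem hinot]
    · rw [if_neg (fun h => hp (hiff.mp h)), if_neg hp]
  intro i
  induction i with
  | zero => rfl
  | succ k ih => rw [step, ih]
end

section
/- Let n ≥ 1 and let f : F₂ⁿ → F₂ have the form f(c_0,…,c_{n-1}) = c_0 + h(c_1,…,c_{n-1}) for some h : F₂^{n-1} → F₂ (so the state map σ_f is a bijection of F₂ⁿ). Let C_1, C_2, …, C_r be an enumeration of all orbits of σ_f. Suppose there exist states u_2, …, u_r such that for every i ∈ {2,…,r}, u_i ∈ C_i and the conjugate state û_i lies in C_j for some j < i. Set A = ⋃_{i=2}^{r} {u_i, û_i}. Then the successor rule ρ defined by ρ(c) = f(c) + 1 if c ∈ A and ρ(c) = f(c) otherwise generates a de Bruijn sequence of order n, i.e., the map c ↦ (c_1,…,c_{n-1}, ρ(c)) is a cyclic permutation of F₂ⁿ. -/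
attribute [local instance] Classical.propDecidable

set_option linter.unusedSectionVars false

open Equiv

section Abstract
variable {α : Type*} [Fintype α] [DecidableEq α]

lemma sameCycle_exists_nat {g : Equiv.Perm α} {x y : α} (h : g.SameCycle x y) :
    ∃ k : ℕ, (g ^ k) x = y := by
  obtain ⟨i, _, hi⟩ := h.exists_pow_eq'
  exact ⟨i, hi⟩

lemma sameCycle_mem_invariant {g : Equiv.Perm α} {S : Set α} (hS : ∀ x ∈ S, g x ∈ S)
    {x y : α} (hx : x ∈ S) (h : g.SameCycle x y) : y ∈ S := by
  obtain ⟨k, rfl⟩ := sameCycle_exists_nat h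
  clear h
  induction k with
  | zero => simpa using hx
  | succ k ih =>
      rw [pow_succ', Equiv.Perm.mul_apply]
      exact hS _ (by simpa using ih)

lemma pow_eq_of_eqOn {g g' : Equiv.Perm α} {S : Set α} (hS : ∀ x ∈ S, g x ∈ S)
    (heq : ∀ x ∈ S, g' x = g x) (k : ℕ) :
    ∀ x ∈ S, (g' ^ k) x = (g ^ k) x := by
  induction k with
  | zero => intro x _; simp
  | succ k ih =>
      intro x hx
      rw [pow_succ, pow_succ, Equiv.Perm.mul_apply, Equiv.Perm.mul_apply, heq x hx]
      exact ih _ (hS x hx)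

lemma sameCycle_of_eqOn {g g' : Equiv.Perm α} {S : Set α} (hS : ∀ x ∈ S, g x ∈ S)
    (heq : ∀ x ∈ S, g' x = g x) {x y : α} (hx : x ∈ S) (h : g.SameCycle x y) :
    g'.SameCycle x y := by
  obtain ⟨k, rfl⟩ := sameCycle_exists_nat h
  exact ⟨(k : ℤ), by rw [zpow_natCast, pow_eq_of_eqOn hS heq k x hx]⟩

/-- Merging lemma: multiplying by a swap of two elements in different cycles
connects them. -/
lemma swap_mul_sameCycle_pair {g : Equiv.Perm α} {a b : α} (hab : ¬ g.SameCycle a b) :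
    (g * Equiv.swap a b).SameCycle a b := by
  have hne : a ≠ b := fun h => hab (h ▸ Equiv.Perm.SameCycle.refl g a)
  have hN : 0 < orderOf g := orderOf_pos g
  have hex : ∃ k, 0 < k ∧ (g ^ k) b = b :=
    ⟨orderOf g, hN, by rw [pow_orderOf_eq_one]; rfl⟩
  classical
  obtain ⟨hq0, hqb⟩ : 0 < Nat.find hex ∧ (g ^ Nat.find hex) b = b := Nat.find_spec hex
  set q := Nat.find hex with hqdef
  have hmin : ∀ m, 0 < m → m < q → (g ^ m) b ≠ b := by
    intro m hm0 hmq hc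
    exact Nat.find_min hex hmq ⟨hm0, hc⟩
  have hnotb_a : ∀ m : ℕ, (g ^ m) b ≠ a := by
    intro m hc
    exact hab (Equiv.Perm.SameCycle.symm ⟨(m : ℤ), by rw [zpow_natCast]; exact hc⟩)
  have hstart : (g * Equiv.swap a b) a = g b := by
    rw [Equiv.Perm.mul_apply, Equiv.swap_apply_left]
  have hstep : ∀ m, 0 < m → m < q →
      (g * Equiv.swap a b) ((g ^ m) b) = (g ^ (m + 1)) b := by
    intro m hm0 hmq
    rw [Equiv.Perm.mul_apply, Equiv.swap_apply_of_ne_of_ne (hnotb_a m) (hmin m hm0 hmq),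
      pow_succ', Equiv.Perm.mul_apply]
  have claim : ∀ m, m < q → ((g * Equiv.swap a b) ^ (m + 1)) a = (g ^ (m + 1)) b := by
    intro m
    induction m with
    | zero => intro _; simpa using hstart
    | succ m ih =>
        intro hm
        rw [pow_succ', Equiv.Perm.mul_apply, ih (by omega),
          hstep (m + 1) (Nat.succ_pos m) (by omega)]
  have final : ((g * Equiv.swap a b) ^ q) a = b := by
    rcases Nat.eq_zero_or_pos (q - 1) with hm0 | hm0
    · have hq1 : q = 1 := by omega
      have h1 : g b = b := by have := hqb; rwa [hq1, pow_one] at this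
      rw [hq1, pow_one, hstart, h1]
    · have hq : q = (q - 2) + 1 + 1 := by omega
      rw [hq, pow_succ', Equiv.Perm.mul_apply, claim (q - 2) (by omega),
        hstep (q - 2 + 1) (by omega) (by omega), ← hq, hqb]
  exact ⟨(q : ℤ), by rw [zpow_natCast]; exact final⟩

lemma swap_mul_sameCycle_lift {g : Equiv.Perm α} {a b : α} (hab : ¬ g.SameCycle a b)
    {x y : α} (h : g.SameCycle x y) : (g * Equiv.swap a b).SameCycle x y := by
  have step : ∀ z : α, (g * Equiv.swap a b).SameCycle z (g z) := by
    intro z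
    by_cases hza : z = a
    · rw [hza]
      have h1 : (g * Equiv.swap a b) b = g a := by
        rw [Equiv.Perm.mul_apply, Equiv.swap_apply_right]
      exact (swap_mul_sameCycle_pair hab).trans (h1 ▸ ⟨(1 : ℤ), by simp⟩)
    · by_cases hzb : z = b
      · rw [hzb]
        have h1 : (g * Equiv.swap a b) a = g b := by
          rw [Equiv.Perm.mul_apply, Equiv.swap_apply_left]
        exact (swap_mul_sameCycle_pair hab).symm.trans (h1 ▸ ⟨(1 : ℤ), by simp⟩)
      · have h1 : (g * Equiv.swap a b) z = g z := by
          rw [Equiv.Perm.mul_apply, Equiv.swap_apply_of_ne_of_ne hza hzb]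
        exact h1 ▸ ⟨(1 : ℤ), by simp⟩
  obtain ⟨k, rfl⟩ := sameCycle_exists_nat h
  clear h
  induction k with
  | zero => simpa using Equiv.Perm.SameCycle.refl _ x
  | succ k ih =>
      rw [pow_succ', Equiv.Perm.mul_apply]
      exact Equiv.Perm.SameCycle.trans (by simpa using ih) (step _)

end Abstract

set_option linter.unusedSectionVars false
set_option maxHeartbeats 1000000

open Equiv

section Join
variable {α : Type*} [Fintype α] [DecidableEq α]

def AP (conj : α → α) {r : ℕ} (u : Fin r → α) (m : ℕ) (x : α) : Prop :=
  ∃ i : Fin r, 0 < (i : ℕ) ∧ (i : ℕ) ≤ m ∧ (x = u i ∨ x = conj (u i))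

noncomputable def KM (conj : α → α) {r : ℕ} (u : Fin r → α) (m : ℕ) (x : α) : α :=
  if AP conj u m x then conj x else x

lemma AP_conj {conj : α → α} (hconj : Function.Involutive conj) {r : ℕ} {u : Fin r → α}
    {m : ℕ} {x : α} (h : AP conj u m x) : AP conj u m (conj x) := by
  obtain ⟨i, hi0, him, h | h⟩ := h
  · exact ⟨i, hi0, him, Or.inr (by rw [h])⟩
  · exact ⟨i, hi0, him, Or.inl (by rw [h, hconj])⟩

lemma KM_inv {conj : α → α} (hconj : Function.Involutive conj) {r : ℕ} (u : Fin r → α)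
    (m : ℕ) : Function.Involutive (KM conj u m) := by
  intro x
  by_cases h : AP conj u m x
  · have h1 : KM conj u m x = conj x := if_pos h
    have h2 : KM conj u m (conj x) = conj (conj x) := if_pos (AP_conj hconj h)
    rw [h1, h2, hconj]
  · have h1 : KM conj u m x = x := if_neg h
    rw [h1, h1]

noncomputable def SM (σ : Equiv.Perm α) {conj : α → α} (hconj : Function.Involutive conj)
    {r : ℕ} (u : Fin r → α) (m : ℕ) : Equiv.Perm α :=
  σ * Function.Involutive.toPerm (KM conj u m) (KM_inv hconj u m)

lemma SM_apply (σ : Equiv.Perm α) {conj : α → α} (hconj : Function.Involutive conj)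
    {r : ℕ} (u : Fin r → α) (m : ℕ) (x : α) :
    SM σ hconj u m x = σ (KM conj u m x) := rfl

lemma join_all (σ : Equiv.Perm α) (conj : α → α) (hconj : Function.Involutive conj)
    (r : ℕ) (C : Fin r → Set α)
    (hC1 : ∀ i : Fin r, ∃ v, C i = {w | σ.SameCycle v w})
    (hC2 : ∀ v : α, ∃ i : Fin r, v ∈ C i)
    (hdisj : ∀ i j : Fin r, i ≠ j → ∀ x, x ∈ C i → x ∈ C j → False)
    (u : Fin r → α)
    (hu : ∀ i : Fin r, 0 < (i : ℕ) →
      u i ∈ C i ∧ ∃ j : Fin r, (j : ℕ) < (i : ℕ) ∧ conj (u i) ∈ C j)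
    (τ : Equiv.Perm α)
    (hτ : ∀ x, τ x =
      if (∃ i : Fin r, 0 < (i : ℕ) ∧ (x = u i ∨ x = conj (u i))) then σ (conj x) else σ x) :
    ∀ x y, τ.SameCycle x y := by
  classical
  have cinv : ∀ (i : Fin r) (x : α), x ∈ C i → σ x ∈ C i := by
    intro i x hx
    obtain ⟨v, hv⟩ := hC1 i
    rw [hv] at hx ⊢
    exact hx.trans ⟨(1 : ℤ), by simp⟩
  have cconn : ∀ (i : Fin r) (x y : α), x ∈ C i → y ∈ C i → σ.SameCycle x y := by
    intro i x y hx hy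
    obtain ⟨v, hv⟩ := hC1 i
    rw [hv] at hx hy
    exact Equiv.Perm.SameCycle.trans (Equiv.Perm.SameCycle.symm hx) hy
  have pd1 : ∀ i j : Fin r, 0 < (i : ℕ) → 0 < (j : ℕ) → i ≠ j → u i ≠ u j := by
    intro i j hi hj hij he
    exact hdisj i j hij (u i) (hu i hi).1 (he ▸ (hu j hj).1)
  have pd2 : ∀ i j : Fin r, 0 < (i : ℕ) → 0 < (j : ℕ) → u i ≠ conj (u j) := by
    intro i j hi hj he
    obtain ⟨huiC, i1, hi1, hciC⟩ := hu i hi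
    obtain ⟨hujC, j1, hj1, hcjC⟩ := hu j hj
    have hij1 : i = j1 := by
      by_contra hne
      exact hdisj i j1 hne (u i) huiC (he ▸ hcjC)
    have hcui : conj (u i) = u j := by rw [he, hconj]
    have hji1 : j = i1 := by
      by_contra hne
      exact hdisj j i1 hne (u j) hujC (hcui ▸ hciC)
    have h1 : (i : ℕ) = (j1 : ℕ) := by rw [hij1]
    have h2 : (j : ℕ) = (i1 : ℕ) := by rw [hji1]
    omega
  have pd3 : ∀ i j : Fin r, 0 < (i : ℕ) → 0 < (j : ℕ) → i ≠ j →
      conj (u i) ≠ conj (u j) := by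
    intro i j hi hj hij he
    exact pd1 i j hi hj hij (hconj.injective he)
  have kfix : ∀ (m : ℕ) (i : Fin r), m < (i : ℕ) → ∀ x ∈ C i, KM conj u m x = x := by
    intro m i hmi x hx
    rw [KM, if_neg]
    rintro ⟨j, hj0, hjm, h | h⟩
    · exact hdisj i j (by intro he; rw [he] at hmi; omega) x hx (h ▸ (hu j hj0).1)
    · obtain ⟨_, j1, hj1, hcjC⟩ := hu j hj0
      exact hdisj i j1 (by intro he; rw [he] at hmi; omega) x hx (h ▸ hcjC)
  have smeqC : ∀ (m : ℕ) (i : Fin r), m < (i : ℕ) → ∀ x ∈ C i,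
      SM σ hconj u m x = σ x := by
    intro m i hmi x hx
    rw [SM_apply, kfix m i hmi x hx]
  have sep : ∀ (m : ℕ) (i : Fin r), m < (i : ℕ) → ∀ x ∈ C i, SM σ hconj u m x ∈ C i := by
    intro m i hmi x hx
    rw [smeqC m i hmi x hx]
    exact cinv i x hx
  have main : ∀ m : ℕ, ∀ x, (∃ i : Fin r, (i : ℕ) ≤ m ∧ x ∈ C i) →
      ∀ y, (∃ i : Fin r, (i : ℕ) ≤ m ∧ y ∈ C i) → (SM σ hconj u m).SameCycle x y := by
    intro m
    induction m with
    | zero =>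
        rintro x ⟨i, hi, hxi⟩ y ⟨j, hj, hyj⟩
        have hij : i = j := Fin.ext (by omega)
        subst hij
        have hsc : σ.SameCycle x y := cconn i x y hxi hyj
        have heq : ∀ z ∈ (Set.univ : Set α), SM σ hconj u 0 z = σ z := by
          intro z _
          rw [SM_apply, KM, if_neg]
          rintro ⟨j', hj'0, hj'm, _⟩
          omega
        exact sameCycle_of_eqOn (fun z _ => Set.mem_univ _) heq (Set.mem_univ x) hsc
    | succ m ih =>
        by_cases hr : m + 1 < r
        · have hi0lt : m + 1 < r := hr
          obtain ⟨haC, j, hjlt, hbC⟩ := hu ⟨m + 1, hr⟩ (Nat.succ_pos m)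
          have hji0 : j ≠ ⟨m + 1, hr⟩ := by
            intro he
            rw [he] at hjlt
            simp at hjlt
          have hbD : ∃ i : Fin r, (i : ℕ) ≤ m ∧ conj (u ⟨m + 1, hr⟩) ∈ C i :=
            ⟨j, by simpa using Nat.lt_succ_iff.mp hjlt, hbC⟩
          have hnsc : ¬ (SM σ hconj u m).SameCycle (u ⟨m + 1, hr⟩) (conj (u ⟨m + 1, hr⟩)) := by
            intro hsc
            have hbCi0 : conj (u ⟨m + 1, hr⟩) ∈ C ⟨m + 1, hr⟩ :=
              sameCycle_mem_invariant (sep m ⟨m + 1, hr⟩ (Nat.lt_succ_self m)) haC hsc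
            exact hdisj j ⟨m + 1, hr⟩ hji0 _ hbC hbCi0
          have hsm1 : SM σ hconj u (m + 1)
              = SM σ hconj u m * Equiv.swap (u ⟨m + 1, hr⟩) (conj (u ⟨m + 1, hr⟩)) := by
            apply Equiv.ext
            intro x
            have h1 : (SM σ hconj u m * Equiv.swap (u ⟨m + 1, hr⟩) (conj (u ⟨m + 1, hr⟩))) x
                = σ (KM conj u m (Equiv.swap (u ⟨m + 1, hr⟩) (conj (u ⟨m + 1, hr⟩)) x)) := rfl
            rw [h1, SM_apply]
            congr 1
            by_cases hxa : x = u ⟨m + 1, hr⟩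
            · subst hxa
              rw [Equiv.swap_apply_left]
              have hP : AP conj u (m + 1) (u ⟨m + 1, hr⟩) :=
                ⟨⟨m + 1, hr⟩, Nat.succ_pos m, le_refl _, Or.inl rfl⟩
              rw [KM, if_pos hP, KM, if_neg]
              rintro ⟨j', hj'0, hj'm, h | h⟩
              · exact pd2 j' ⟨m + 1, hr⟩ hj'0 (Nat.succ_pos m) h.symm
              · refine pd3 ⟨m + 1, hr⟩ j' (Nat.succ_pos m) hj'0 ?_ h
                intro he
                have h' : m + 1 = (j' : ℕ) := congrArg Fin.val he
                omega
            · by_cases hxb : x = conj (u ⟨m + 1, hr⟩)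
              · subst hxb
                rw [Equiv.swap_apply_right]
                have hP : AP conj u (m + 1) (conj (u ⟨m + 1, hr⟩)) :=
                  ⟨⟨m + 1, hr⟩, Nat.succ_pos m, le_refl _, Or.inr rfl⟩
                rw [KM, if_pos hP, hconj, KM, if_neg]
                rintro ⟨j', hj'0, hj'm, h | h⟩
                · refine pd1 ⟨m + 1, hr⟩ j' (Nat.succ_pos m) hj'0 ?_ h
                  intro he
                  have h' : m + 1 = (j' : ℕ) := congrArg Fin.val he
                  omega
                · exact pd2 ⟨m + 1, hr⟩ j' (Nat.succ_pos m) hj'0 h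
              · rw [Equiv.swap_apply_of_ne_of_ne hxa hxb]
                by_cases hPm : AP conj u m x
                · obtain ⟨j', a1, a2, a3⟩ := hPm
                  rw [KM, if_pos ⟨j', a1, Nat.le_succ_of_le a2, a3⟩, KM,
                    if_pos ⟨j', a1, a2, a3⟩]
                · rw [KM, if_neg, KM, if_neg hPm]
                  rintro ⟨j', hj'0, hj'm, hor⟩
                  by_cases hj'le : (j' : ℕ) ≤ m
                  · exact hPm ⟨j', hj'0, hj'le, hor⟩
                  · have hj'eq : j' = ⟨m + 1, hr⟩ := Fin.ext (show (j' : ℕ) = m + 1 by omega)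
                    rw [hj'eq] at hor
                    rcases hor with h | h
                    · exact hxa h
                    · exact hxb h
          have lift : ∀ x y, (SM σ hconj u m).SameCycle x y →
              (SM σ hconj u (m + 1)).SameCycle x y := by
            intro x y hxy
            rw [hsm1]
            exact swap_mul_sameCycle_lift hnsc hxy
          have habsc : (SM σ hconj u (m + 1)).SameCycle (u ⟨m + 1, hr⟩)
              (conj (u ⟨m + 1, hr⟩)) := by
            rw [hsm1]
            exact swap_mul_sameCycle_pair hnsc
          have key : ∀ z, (∃ i : Fin r, (i : ℕ) ≤ m + 1 ∧ z ∈ C i) →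
              (SM σ hconj u (m + 1)).SameCycle z (conj (u ⟨m + 1, hr⟩)) := by
            rintro z ⟨i, him, hzi⟩
            by_cases hile : (i : ℕ) ≤ m
            · exact lift _ _ (ih z ⟨i, hile, hzi⟩ _ hbD)
            · have hieq : i = ⟨m + 1, hr⟩ := Fin.ext (show (i : ℕ) = m + 1 by omega)
              rw [hieq] at hzi
              have h1 : σ.SameCycle z (u ⟨m + 1, hr⟩) :=
                cconn ⟨m + 1, hr⟩ z _ hzi haC
              have h2 : (SM σ hconj u m).SameCycle z (u ⟨m + 1, hr⟩) :=
                sameCycle_of_eqOn (cinv ⟨m + 1, hr⟩)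
                  (smeqC m ⟨m + 1, hr⟩ (Nat.lt_succ_self m)) hzi h1
              exact (lift _ _ h2).trans habsc
          intro x hx y hy
          exact (key x hx).trans (key y hy).symm
        · have hse : SM σ hconj u (m + 1) = SM σ hconj u m := by
            apply Equiv.ext
            intro x
            rw [SM_apply, SM_apply]
            congr 1
            by_cases hPm : AP conj u m x
            · obtain ⟨j', a1, a2, a3⟩ := hPm
              rw [KM, if_pos ⟨j', a1, Nat.le_succ_of_le a2, a3⟩, KM,
                if_pos ⟨j', a1, a2, a3⟩]
            · rw [KM, if_neg, KM, if_neg hPm]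
              rintro ⟨j', hj'0, hj'm, hor⟩
              exact hPm ⟨j', hj'0, by have := j'.isLt; omega, hor⟩
          rintro x ⟨i, hi, hxi⟩ y ⟨j', hj', hyj⟩
          rw [hse]
          exact ih x ⟨i, by have := i.isLt; omega, hxi⟩ y ⟨j', by have := j'.isLt; omega, hyj⟩
  intro x y
  obtain ⟨i, hxi⟩ := hC2 x
  obtain ⟨j, hyj⟩ := hC2 y
  have hr1 : 1 ≤ r := by have := i.isLt; omega
  have hτe : τ = SM σ hconj u (r - 1) := by
    apply Equiv.ext
    intro z
    rw [hτ z, SM_apply]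
    by_cases hz : ∃ i' : Fin r, 0 < (i' : ℕ) ∧ (z = u i' ∨ z = conj (u i'))
    · rw [if_pos hz]
      obtain ⟨i', hi'0, hor⟩ := hz
      rw [KM, if_pos ⟨i', hi'0, by have := i'.isLt; omega, hor⟩]
    · rw [if_neg hz, KM, if_neg]
      rintro ⟨i', hi'0, _, hor⟩
      exact hz ⟨i', hi'0, hor⟩
  rw [hτe]
  exact main (r - 1) x ⟨i, by have := i.isLt; omega, hxi⟩ y ⟨j, by have := j.isLt; omega, hyj⟩

end Join

lemma nextMap_apply_lt {n : ℕ} (g : (Fin n → F2) → F2) (c : Fin n → F2) (i : Fin n)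
    (hlt : (i : ℕ) + 1 < n) : nextMap g c i = c ⟨(i : ℕ) + 1, hlt⟩ := dif_pos hlt

lemma nextMap_apply_last {n : ℕ} (g : (Fin n → F2) → F2) (c : Fin n → F2) (i : Fin n)
    (hlt : ¬ ((i : ℕ) + 1 < n)) : nextMap g c i = g c := dif_neg hlt

lemma conjSt_involutive {n : ℕ} : Function.Involutive (conjSt : (Fin n → F2) → _) := by
  intro v
  funext i
  simp only [conjSt]
  by_cases hi : (i : ℕ) = 0
  · rw [if_pos hi, if_pos hi, add_assoc, show (1 : F2) + 1 = 0 by decide, add_zero]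
  · rw [if_neg hi, if_neg hi]

lemma stTail_conjSt {n : ℕ} (c : Fin n → F2) : stTail (conjSt c) = stTail c := by
  funext j
  simp only [stTail, conjSt]
  rw [if_neg (by omega)]

/-- the successor-rule framework (Theorem 3.5 of Gabric–Sawada–Williams–Wong). -/
theorem successor_rule_framework (n : ℕ) (hn : 1 ≤ n)
    (f : (Fin n → F2) → F2) (h : (Fin (n - 1) → F2) → F2)
    (hf : ∀ c, f c = get c 0 + h (stTail c))
    (r : ℕ) (C : Fin r → Set (Fin n → F2))
    (hC1 : ∀ i : Fin r, ∃ v, C i = orbit (nextMap f) v)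
    (hC2 : ∀ v : Fin n → F2, ∃ i : Fin r, C i = orbit (nextMap f) v)
    (hC3 : Function.Injective C)
    (u : Fin r → (Fin n → F2))
    (hu : ∀ i : Fin r, 0 < (i : ℕ) →
      u i ∈ C i ∧ ∃ j : Fin r, (j : ℕ) < (i : ℕ) ∧ conjSt (u i) ∈ C j)
    (A : Set (Fin n → F2))
    (hA : A = {x | ∃ i : Fin r, 0 < (i : ℕ) ∧ (x = u i ∨ x = conjSt (u i))})
    (ρ : (Fin n → F2) → F2)
    (hρ1 : ∀ c ∈ A, ρ c = f c + 1) (hρ2 : ∀ c ∉ A, ρ c = f c) :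
    generatesDB ρ := by
  classical
  -- the state map of f is injective
  have hinj : Function.Injective (nextMap f) := by
    intro c c' hcc
    have htail : ∀ j : Fin n, 0 < (j : ℕ) → c j = c' j := by
      intro j hj
      have h1 := congrFun hcc ⟨(j : ℕ) - 1, by omega⟩
      rw [nextMap_apply_lt f c _ (by simp; omega), nextMap_apply_lt f c' _ (by simp; omega)]
        at h1
      have hje : (⟨((⟨(j : ℕ) - 1, by omega⟩ : Fin n) : ℕ) + 1, by simp; omega⟩ : Fin n) = j :=
        Fin.ext (by simp; omega)
      rwa [hje] at h1
    have htl : stTail c = stTail c' := by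
      funext j
      exact htail ⟨(j : ℕ) + 1, by have := j.isLt; omega⟩ (by simp)
    have hlast := congrFun hcc ⟨n - 1, by omega⟩
    rw [nextMap_apply_last f c _ (by simp; omega), nextMap_apply_last f c' _ (by simp; omega),
      hf, hf, htl] at hlast
    have h0n : 0 < n := by omega
    have hhead : c ⟨0, h0n⟩ = c' ⟨0, h0n⟩ := by
      have h0 : _root_.get c 0 = _root_.get c' 0 := add_right_cancel hlast
      have e1 : _root_.get c 0 = c ⟨0, h0n⟩ := dif_pos h0n
      have e2 : _root_.get c' 0 = c' ⟨0, h0n⟩ := dif_pos h0n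
      rwa [e1, e2] at h0
    funext j
    by_cases hj : 0 < (j : ℕ)
    · exact htail j hj
    · have hj0 : j = ⟨0, h0n⟩ := Fin.ext (show (j : ℕ) = 0 by omega)
      rw [hj0]
      exact hhead
  have hbij : Function.Bijective (nextMap f) := Finite.injective_iff_bijective.mp hinj
  set σ : Equiv.Perm (Fin n → F2) := Equiv.ofBijective (nextMap f) hbij with hσdef
  have hσco : ⇑σ = nextMap f := rfl
  have hσit : ∀ (k : ℕ) (x : Fin n → F2), (σ ^ k) x = (nextMap f)^[k] x := by
    intro k x
    rw [Equiv.Perm.coe_pow]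
    rfl
  have horb : ∀ v : Fin n → F2, orbit (nextMap f) v = {w | σ.SameCycle v w} := by
    intro v
    ext w
    constructor
    · rintro ⟨k, hk⟩
      exact ⟨(k : ℤ), by rw [zpow_natCast, hσit k v]; exact hk⟩
    · intro hsc
      obtain ⟨k, hk⟩ := sameCycle_exists_nat hsc
      exact ⟨k, by rw [← hσit k v]; exact hk⟩
  have hC1' : ∀ i : Fin r, ∃ v, C i = {w | σ.SameCycle v w} := by
    intro i
    obtain ⟨v, hv⟩ := hC1 i
    exact ⟨v, by rw [hv, horb]⟩
  have hC2' : ∀ v : Fin n → F2, ∃ i : Fin r, v ∈ C i := by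
    intro v
    obtain ⟨i, hi⟩ := hC2 v
    exact ⟨i, by rw [hi]; exact ⟨0, rfl⟩⟩
  have hdisj : ∀ i j : Fin r, i ≠ j → ∀ x, x ∈ C i → x ∈ C j → False := by
    intro i j hij x hxi hxj
    obtain ⟨v, hv⟩ := hC1' i
    obtain ⟨w, hw⟩ := hC1' j
    rw [hv] at hxi
    rw [hw] at hxj
    apply hij
    apply hC3
    rw [hv, hw]
    ext z
    constructor
    · intro hz
      exact Equiv.Perm.SameCycle.trans hxj (Equiv.Perm.SameCycle.trans
        (Equiv.Perm.SameCycle.symm hxi) hz)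
    · intro hz
      exact Equiv.Perm.SameCycle.trans hxi (Equiv.Perm.SameCycle.trans
        (Equiv.Perm.SameCycle.symm hxj) hz)
  have hr1 : 1 ≤ r := by
    obtain ⟨i0, _⟩ := hC2' (fun _ => 0)
    have := i0.isLt
    omega
  have hmemA : ∀ x, x ∈ A ↔ ∃ i : Fin r, 0 < (i : ℕ) ∧ (x = u i ∨ x = conjSt (u i)) := by
    intro x
    rw [hA]
    exact Iff.rfl
  have hAP : ∀ x, (x ∈ A) ↔ AP conjSt u (r - 1) x := by
    intro x
    rw [hmemA]
    constructor
    · rintro ⟨i, hi0, hor⟩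
      exact ⟨i, hi0, by have := i.isLt; omega, hor⟩
    · rintro ⟨i, hi0, _, hor⟩
      exact ⟨i, hi0, hor⟩
  -- key computation: flipping the feedback bit moves to the conjugate's successor
  have hkey : ∀ c, ρ c = f c + 1 → nextMap ρ c = nextMap f (conjSt c) := by
    intro c hc
    funext i
    by_cases hlt : (i : ℕ) + 1 < n
    · rw [nextMap_apply_lt ρ c i hlt, nextMap_apply_lt f (conjSt c) i hlt]
      simp only [conjSt]
      rw [if_neg (by omega)]
    · rw [nextMap_apply_last ρ c i hlt, nextMap_apply_last f (conjSt c) i hlt, hc, hf, hf,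
        stTail_conjSt]
      have h0n : 0 < n := by omega
      have e1 : _root_.get (conjSt c) 0 = conjSt c ⟨0, h0n⟩ := dif_pos h0n
      have e2 : _root_.get c 0 = c ⟨0, h0n⟩ := dif_pos h0n
      have h2 : _root_.get (conjSt c) 0 = _root_.get c 0 + 1 := by
        rw [e1, e2]
        simp [conjSt]
      rw [h2]
      ring
  have hrho : ∀ c, ρ c = f c → nextMap ρ c = nextMap f c := by
    intro c hc
    funext i
    by_cases hlt : (i : ℕ) + 1 < n
    · rw [nextMap_apply_lt ρ c i hlt, nextMap_apply_lt f c i hlt]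
    · rw [nextMap_apply_last ρ c i hlt, nextMap_apply_last f c i hlt, hc]
  -- the state map of ρ equals the joined permutation
  have hco : nextMap ρ = ⇑(SM σ conjSt_involutive u (r - 1)) := by
    funext x
    rw [SM_apply]
    by_cases hx : x ∈ A
    · have hap : AP conjSt u (r - 1) x := (hAP x).mp hx
      have hKM : KM conjSt u (r - 1) x = conjSt x := if_pos hap
      rw [hkey x (hρ1 x hx), hKM]
      rfl
    · have hap : ¬ AP conjSt u (r - 1) x := fun hh => hx ((hAP x).mpr hh)
      have hKM : KM conjSt u (r - 1) x = x := if_neg hap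
      rw [hrho x (hρ2 x hx), hKM]
      rfl
  have hτ : ∀ x, (SM σ conjSt_involutive u (r - 1)) x =
      if (∃ i : Fin r, 0 < (i : ℕ) ∧ (x = u i ∨ x = conjSt (u i))) then σ (conjSt x)
      else σ x := by
    intro x
    rw [SM_apply]
    by_cases hx : ∃ i : Fin r, 0 < (i : ℕ) ∧ (x = u i ∨ x = conjSt (u i))
    · have hap : AP conjSt u (r - 1) x := (hAP x).mp ((hmemA x).mpr hx)
      have hKM : KM conjSt u (r - 1) x = conjSt x := if_pos hap
      rw [if_pos hx, hKM]
    · have hap : ¬ AP conjSt u (r - 1) x := fun hh => hx ((hmemA x).mp ((hAP x).mpr hh))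
      have hKM : KM conjSt u (r - 1) x = x := if_neg hap
      rw [if_neg hx, hKM]
  have hall := join_all σ conjSt conjSt_involutive r C hC1' hC2' hdisj u hu
    (SM σ conjSt_involutive u (r - 1)) hτ
  intro x y
  obtain ⟨k, hk⟩ := sameCycle_exists_nat (hall x y)
  refine ⟨k, ?_⟩
  rw [hco]
  rw [← Equiv.Perm.coe_pow]
  exact hk
end

section
/- Let n ≥ 3. For c = (c_0,…,c_{n-1}) ∈ F₂ⁿ define ς(c) = c_0 + c_1 + c_{n-1} + 1 if the (n−1)-tuple (c_1,…,c_{n-1}) is a necklace or a co-necklace, and ς(c) = c_0 + c_1 + c_{n-1} otherwise. Then ς generates a de Bruijn sequence of order n, i.e., the map c ↦ (c_1,…,c_{n-1}, ς(c)) is a cyclic permutation of F₂ⁿ. -/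
attribute [local instance] Classical.propDecidable

/-!
The pure run-length register `prr`, with feedback `c₀ + c₁ + cₘ` on `m + 1 = n` stages, generates
sequences with `s (t + m) = s t + ε`, where `ε = c₀ + cₘ` is constant on a cycle. So the cycles
of `prr` are the cycle of `0` and, for each necklace (`ε = 0`) or co-necklace (`ε = 1`) `u` of
length `m`, the cycle whose least state is `repOf u = prr (1, u)`. The rule `ς` complements the
feedback exactly on the conjugate states `(0, u)` and `(1, u)` of these tails, which exchanges
their successors. Taking the tails in the order of `repOf u`, each exchange joins the cycle of
`(1, u)` to the cycles already joined, which contain `(0, u)` because `(0, u) < repOf u`; in the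
end a single cycle is left.
-/

section Orbits

variable {α : Type*} {f g : α → α} {a b x y : α}

lemma inOrbit_refl (f : α → α) (a : α) : inOrbit f a a := ⟨0, rfl⟩

lemma inOrbit_apply (f : α → α) (a : α) : inOrbit f a (f a) := ⟨1, rfl⟩

lemma inOrbit.trans {c : α} (hab : inOrbit f a b) (hbc : inOrbit f b c) : inOrbit f a c := by
  obtain ⟨k, rfl⟩ := hab
  obtain ⟨l, rfl⟩ := hbc
  exact ⟨l + k, Function.iterate_add_apply f l k a⟩

lemma inOrbit.symm [Finite α] (hf : f.Injective) (h : inOrbit f a b) : inOrbit f b a := by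
  obtain ⟨k, rfl⟩ := h
  obtain ⟨p, hp, hpa⟩ := hf.mem_periodicPts a
  refine ⟨p * k - k, ?_⟩
  rw [← Function.iterate_add_apply, Nat.sub_add_cancel (Nat.le_mul_of_pos_left k hp)]
  exact hpa.mul_const k

lemma iterate_eq_of_eqOn {s : Set α} (hs : Set.MapsTo f s s) (hfg : Set.EqOn f g s) (ha : a ∈ s)
    (k : ℕ) : g^[k] a = f^[k] a := by
  induction k with
  | zero => rfl
  | succ k ih =>
    rw [Function.iterate_succ_apply', Function.iterate_succ_apply', ih, hfg (hs.iterate k ha)]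

lemma inOrbit_of_eqOn {s : Set α} (hs : Set.MapsTo f s s) (hfg : Set.EqOn f g s) (ha : a ∈ s)
    (h : inOrbit f a b) : inOrbit g a b := by
  obtain ⟨k, rfl⟩ := h
  exact ⟨k, iterate_eq_of_eqOn hs hfg ha k⟩

lemma mem_of_inOrbit_of_eqOn {s : Set α} (hs : Set.MapsTo f s s) (hfg : Set.EqOn f g s)
    (ha : a ∈ s) (h : inOrbit g a b) : b ∈ s := by
  obtain ⟨k, rfl⟩ := h
  rw [iterate_eq_of_eqOn hs hfg ha k]
  exact hs.iterate k ha

variable [Finite α] [DecidableEq α]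

lemma inOrbit_comp_swap_self (hf : f.Injective) (hxy : ¬ inOrbit f x y) :
    inOrbit (f ∘ Equiv.swap x y) x y := by
  have hex : ∃ k, f^[k] (f y) = y := (inOrbit_apply f y).symm hf
  set k := Nat.find hex
  have havoid : ∀ i < k, f^[i] (f y) ≠ x ∧ f^[i] (f y) ≠ y := fun i hi =>
    ⟨fun h => hxy (((inOrbit_apply f y).trans ⟨i, h⟩).symm hf), Nat.find_min hex hi⟩
  have hiter : ∀ i ≤ k, (f ∘ Equiv.swap x y)^[i] (f y) = f^[i] (f y) := by
    intro i hi
    induction i with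
    | zero => rfl
    | succ i ih =>
      obtain ⟨hx, hy⟩ := havoid i (by omega)
      rw [Function.iterate_succ_apply', Function.iterate_succ_apply', ih (by omega),
        Function.comp_apply, Equiv.swap_apply_of_ne_of_ne hx hy]
  refine ⟨k + 1, ?_⟩
  rw [Function.iterate_succ_apply, Function.comp_apply, Equiv.swap_apply_left, hiter k le_rfl]
  exact Nat.find_spec hex

lemma inOrbit_comp_swap_of_inOrbit (hf : f.Injective) (hxy : ¬ inOrbit f x y)
    (h : inOrbit f a b) : inOrbit (f ∘ Equiv.swap x y) a b := by
  have hstep : ∀ v, inOrbit (f ∘ Equiv.swap x y) v (f v) := by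
    intro v
    have hmerge := inOrbit_comp_swap_self hf hxy
    by_cases hvx : v = x
    · subst hvx
      refine hmerge.trans ?_
      simpa [Function.comp_apply] using inOrbit_apply (f ∘ Equiv.swap v y) y
    by_cases hvy : v = y
    · subst hvy
      refine (hmerge.symm (hf.comp (Equiv.injective _))).trans ?_
      simpa [Function.comp_apply] using inOrbit_apply (f ∘ Equiv.swap x v) x
    simpa [Function.comp_apply, Equiv.swap_apply_of_ne_of_ne hvx hvy] using
      inOrbit_apply (f ∘ Equiv.swap x y) v
  obtain ⟨k, rfl⟩ := h
  induction k with
  | zero => exact inOrbit_refl _ a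
  | succ k ih => exact ih.trans (by rw [Function.iterate_succ_apply']; exact hstep _)

end Orbits

namespace Sala

section Bits

lemma F2_eq_zero_or_eq_one (x : F2) : x = 0 ∨ x = 1 := by
  revert x; decide

lemma F2_val_le_one (x : F2) : x.val ≤ 1 := by
  revert x; decide

lemma F2_val_lt_val_of_le_of_ne {x y : F2} (hle : x.val ≤ y.val) (hne : x ≠ y) : x.val < y.val :=
  lt_of_le_of_ne hle fun h => hne (ZMod.val_injective 2 h)

lemma get_of_lt {n : ℕ} (c : Fin n → F2) {j : ℕ} (h : j < n) : get c j = c ⟨j, h⟩ := dif_pos h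

lemma get_coe {n : ℕ} (c : Fin n → F2) (i : Fin n) : get c i = c i := get_of_lt c i.isLt

lemma get_zero {n : ℕ} (j : ℕ) : get (0 : Fin n → F2) j = 0 := by
  unfold _root_.get; split <;> rfl

lemma funext_get {n : ℕ} {a b : Fin n → F2} (h : ∀ j < n, get a j = get b j) : a = b := by
  funext i
  simpa only [get_of_lt _ i.isLt] using h i i.isLt

end Bits

section BinaryValue

def binVal : ℕ → (ℕ → F2) → ℕ
  | 0, _ => 0
  | k + 1, s => 2 * binVal k s + (s k).val

def LexLtAt (s t : ℕ → F2) (j : ℕ) : Prop :=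
  (∀ i < j, s i = t i) ∧ (s j).val < (t j).val

lemma binVal_lt (k : ℕ) (s : ℕ → F2) : binVal k s < 2 ^ k := by
  induction k with
  | zero => simp [binVal]
  | succ k ih => rw [binVal, pow_succ]; have := F2_val_le_one (s k); omega

lemma binVal_congr {k : ℕ} {s t : ℕ → F2} (h : ∀ i < k, s i = t i) :
    binVal k s = binVal k t := by
  induction k with
  | zero => rfl
  | succ k ih =>
    rw [binVal, binVal, ih fun i hi => h i (by omega), h k (by omega)]

lemma binVal_succ' (k : ℕ) (s : ℕ → F2) :
    binVal (k + 1) s = (s 0).val * 2 ^ k + binVal k (fun i => s (i + 1)) := by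
  induction k with
  | zero => simp [binVal]
  | succ k ih => rw [binVal, ih, binVal, pow_succ]; ring

lemma LexLtAt.binVal_lt {s t : ℕ → F2} {j k : ℕ} (h : LexLtAt s t j) (hj : j < k) :
    binVal k s < binVal k t := by
  induction k with
  | zero => omega
  | succ k ih =>
    rw [binVal, binVal]
    rcases Nat.lt_succ_iff_lt_or_eq.mp hj with hjk | rfl
    · have := ih hjk; have := F2_val_le_one (s k); omega
    · rw [binVal_congr h.1]; have := h.2; omega

lemma LexLtAt.binVal_le {s t : ℕ → F2} {j : ℕ} (h : LexLtAt s t j) (k : ℕ) :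
    binVal k s ≤ binVal k t := by
  rcases lt_or_ge j k with hj | hj
  · exact (h.binVal_lt hj).le
  · exact (binVal_congr fun i hi => h.1 i (by omega)).le

lemma exists_first_ne {s t : ℕ → F2} {k : ℕ} (h : ∃ i < k, s i ≠ t i) :
    ∃ j < k, (∀ i < j, s i = t i) ∧ s j ≠ t j := by
  obtain ⟨hj, hne⟩ := Nat.find_spec h
  exact ⟨Nat.find h, hj, fun i hi => by_contra fun h' => Nat.find_min h hi ⟨by omega, h'⟩, hne⟩

lemma binVal_eq_binVal_iff {k : ℕ} {s t : ℕ → F2} :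
    binVal k s = binVal k t ↔ ∀ i < k, s i = t i := by
  refine ⟨fun h => ?_, binVal_congr⟩
  by_contra! hne
  obtain ⟨j, hj, hagree, hsj⟩ := exists_first_ne hne
  rcases le_total (s j).val (t j).val with hle | hle
  · exact (LexLtAt.binVal_lt ⟨hagree, F2_val_lt_val_of_le_of_ne hle hsj⟩ hj).ne h
  · have hlt : LexLtAt t s j :=
      ⟨fun i hi => (hagree i hi).symm, F2_val_lt_val_of_le_of_ne hle hsj.symm⟩
    exact (hlt.binVal_lt hj).ne h.symm

noncomputable def tupleVal {k : ℕ} (v : Fin k → F2) : ℕ := binVal k (get v)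

lemma tupleVal_lt {k : ℕ} (v : Fin k → F2) : tupleVal v < 2 ^ k := binVal_lt _ _

lemma tupleVal_injective {k : ℕ} : Function.Injective (tupleVal (k := k)) := fun _ _ h =>
  funext_get (binVal_eq_binVal_iff.mp h)

lemma tupleVal_eq_zero_iff {k : ℕ} (v : Fin k → F2) : tupleVal v = 0 ↔ v = 0 := by
  have h0 : tupleVal (0 : Fin k → F2) = 0 := by
    rw [tupleVal, binVal_congr (t := fun _ => 0) fun i hi => by simp [get_of_lt _ hi]]
    clear v
    induction k with
    | zero => rfl
    | succ k ih => simp [binVal, ih]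
  exact ⟨fun h => tupleVal_injective (h.trans h0.symm), fun h => h ▸ h0⟩

lemma exists_lexLtAt_of_lexLe_of_ne {k : ℕ} {v w : Fin k → F2} (hle : lexLe v w) (hne : v ≠ w) :
    ∃ j < k, LexLtAt (get v) (get w) j := by
  have : ∃ i < k, get v i ≠ get w i := by
    by_contra! h
    exact hne (funext_get h)
  obtain ⟨j, hj, hagree, hvw⟩ := exists_first_ne this
  refine ⟨j, hj, hagree, F2_val_lt_val_of_le_of_ne ?_ hvw⟩
  simpa only [get_of_lt _ hj] using
    hle ⟨j, hj⟩ fun i hi => by simpa only [get_of_lt _ i.isLt] using hagree i hi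

lemma exists_lexLtAt_of_not_lexLe {k : ℕ} {v w : Fin k → F2} (h : ¬ lexLe v w) :
    ∃ j < k, LexLtAt (get w) (get v) j := by
  simp only [lexLe, not_forall, not_le] at h
  obtain ⟨j, hagree, hlt⟩ := h
  refine ⟨j, j.isLt, fun i hi => ?_, by simpa only [get_of_lt _ j.isLt] using hlt⟩
  simpa only [get_of_lt _ (hi.trans j.isLt)] using (hagree ⟨i, by omega⟩ hi).symm

lemma lexLe_iff_tupleVal_le {k : ℕ} (v w : Fin k → F2) : lexLe v w ↔ tupleVal v ≤ tupleVal w := by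
  constructor
  · intro h
    rcases eq_or_ne v w with rfl | hne
    · exact le_rfl
    · obtain ⟨j, hj, hlt⟩ := exists_lexLtAt_of_lexLe_of_ne h hne
      exact (hlt.binVal_lt hj).le
  · intro h
    by_contra hle
    obtain ⟨j, hj, hlt⟩ := exists_lexLtAt_of_not_lexLe hle
    exact (hlt.binVal_lt hj).not_ge h

end BinaryValue

section PureRunLength

variable {m : ℕ}

lemma get_nextMap_of_lt {n : ℕ} (ρ : (Fin n → F2) → F2) (c : Fin n → F2) {j : ℕ}
    (hj : j + 1 < n) : get (nextMap ρ c) j = get c (j + 1) := by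
  rw [get_of_lt _ (by omega), get_of_lt _ hj]
  exact dif_pos hj

lemma get_nextMap_last (ρ : (Fin (m + 1) → F2) → F2) (c : Fin (m + 1) → F2) :
    get (nextMap ρ c) m = ρ c := by
  rw [get_of_lt _ (by omega)]
  exact dif_neg (by simp)

lemma fPRR_eq (c : Fin (m + 1) → F2) : fPRR c = get c 0 + get c 1 + get c m := rfl

noncomputable def prr : (Fin (m + 1) → F2) → Fin (m + 1) → F2 := nextMap fPRR

noncomputable def eps (c : Fin (m + 1) → F2) : F2 := get c 0 + get c m

/-- Closed form of the sequence generated from `c`: the recurrence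
`s (t + m + 1) = s t + s (t + 1) + s (t + m)` says that `s (t + m) - s t` is constant. -/
noncomputable def prrSeq (c : Fin (m + 1) → F2) (i : ℕ) : F2 :=
  get c (i % m) + (i / m : ℕ) * eps c

lemma prrSeq_of_le (hm : 0 < m) (c : Fin (m + 1) → F2) {i : ℕ} (hi : i ≤ m) :
    prrSeq c i = get c i := by
  rcases hi.lt_or_eq with hi | rfl
  · simp [prrSeq, Nat.mod_eq_of_lt hi, Nat.div_eq_of_lt hi]
  · simp only [prrSeq, Nat.mod_self, Nat.div_self hm, eps]
    grind

lemma prrSeq_add (hm : 0 < m) (c : Fin (m + 1) → F2) (i : ℕ) :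
    prrSeq c (i + m) = prrSeq c i + eps c := by
  simp only [prrSeq, Nat.add_mod_right, Nat.add_div_right _ hm]
  push_cast
  ring

lemma get_prr_iterate (hm : 0 < m) (c : Fin (m + 1) → F2) (t : ℕ) {j : ℕ} (hj : j ≤ m) :
    get (prr^[t] c) j = prrSeq c (t + j) := by
  induction t generalizing j with
  | zero => rw [Function.iterate_zero_apply, zero_add, prrSeq_of_le hm c hj]
  | succ t ih =>
    rw [Function.iterate_succ_apply']
    change get (nextMap fPRR (prr^[t] c)) j = _
    rcases hj.lt_or_eq with hj | rfl
    · rw [get_nextMap_of_lt _ _ (by omega), ih (by omega), add_right_comm, add_assoc]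
    · rw [get_nextMap_last, fPRR_eq, ih (Nat.zero_le _), ih (by omega), ih le_rfl, add_zero,
        prrSeq_add hm, prrSeq_add hm, add_right_comm]
      grind

lemma tupleVal_prr_iterate (hm : 0 < m) (c : Fin (m + 1) → F2) (t : ℕ) :
    tupleVal (prr^[t] c) = binVal (m + 1) (fun j => prrSeq c (t + j)) :=
  binVal_congr fun _ hj => get_prr_iterate hm c t (by omega)

end PureRunLength

section NecklaceCriterion

variable {p : ℕ}

noncomputable def periodicExt (P : Fin p → F2) (j : ℕ) : F2 := get P (j % p)

lemma periodicExt_of_lt (P : Fin p → F2) {j : ℕ} (hj : j < p) : periodicExt P j = get P j := by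
  rw [periodicExt, Nat.mod_eq_of_lt hj]

lemma periodicExt_rot (hp : 0 < p) (P : Fin p → F2) (t j : ℕ) :
    periodicExt (rot t P) j = periodicExt P (t + j) := by
  rw [periodicExt, periodicExt, get_of_lt _ (Nat.mod_lt _ hp), get_of_lt _ (Nat.mod_lt _ hp)]
  simp only [rot, Nat.mod_add_mod, add_comm j]

lemma rot_zero (P : Fin p → F2) : rot 0 P = P := by
  funext i
  simp [rot, Nat.mod_eq_of_lt i.isLt]

lemma eq_of_periodicExt_eq {P Q : Fin p → F2} (h : periodicExt P = periodicExt Q) : P = Q :=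
  funext_get fun j hj => by rw [← periodicExt_of_lt P hj, ← periodicExt_of_lt Q hj, h]

lemma seq_eq_of_add_period {m : ℕ} (hm : 0 < m) {s t : ℕ → F2} (e : F2)
    (hs : ∀ i, s (i + m) = s i + e) (ht : ∀ i, t (i + m) = t i + e) (h : ∀ i < m, s i = t i) :
    s = t := by
  funext i
  induction i using Nat.strong_induction_on with
  | _ i ih =>
    rcases lt_or_ge i m with hi | hi
    · exact h i hi
    · obtain ⟨i, rfl⟩ := Nat.exists_eq_add_of_le' hi
      rw [hs, ht, ih i (by omega)]

lemma isNecklace_iff_binVal_periodicExt_le (P : Fin p → F2) (L : ℕ)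
    (hdet : ∀ t, (∀ j < L, periodicExt (rot t P) j = periodicExt P j) → rot t P = P) :
    IsNecklace P ↔ ∀ t, binVal L (periodicExt P) ≤ binVal L (periodicExt (rot t P)) := by
  have hlift : ∀ {Q R : Fin p → F2} {j}, j < p → LexLtAt (get Q) (get R) j →
      LexLtAt (periodicExt Q) (periodicExt R) j := fun hj h =>
    ⟨fun i hi => by rw [periodicExt_of_lt _ (by omega), periodicExt_of_lt _ (by omega), h.1 i hi],
      by rw [periodicExt_of_lt _ hj, periodicExt_of_lt _ hj]; exact h.2⟩
  constructor
  · intro hP t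
    by_cases hrot : rot t P = P
    · rw [hrot]
    · obtain ⟨j, hj, hlt⟩ := exists_lexLtAt_of_lexLe_of_ne (hP t) (Ne.symm hrot)
      exact (hlift hj hlt).binVal_le L
  · intro hmin t
    by_contra hle
    obtain ⟨j, hj, hlt⟩ := exists_lexLtAt_of_not_lexLe hle
    have hagree := binVal_eq_binVal_iff.mp ((hlift hj hlt).binVal_le L |>.antisymm (hmin t))
    rw [hdet t hagree] at hlt
    exact lt_irrefl _ hlt.2

lemma isCycleRep_iff_tupleVal_le {k : ℕ} (σ : (Fin k → F2) → Fin k → F2) (v : Fin k → F2) :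
    isCycleRep σ v ↔ ∀ t, tupleVal v ≤ tupleVal (σ^[t] v) := by
  simp only [isCycleRep, orbit, inOrbit, Set.mem_ofPred_eq, lexLe_iff_tupleVal_le,
    forall_exists_index, forall_apply_eq_imp_iff]

lemma isCycleRep_prr_iff {m : ℕ} (hm : 0 < m) (hp : 0 < p) {c : Fin (m + 1) → F2}
    {P : Fin p → F2} (hP : prrSeq c = periodicExt P) : isCycleRep prr c ↔ IsNecklace P := by
  have hwin (t : ℕ) : tupleVal (prr^[t] c) = binVal (m + 1) (periodicExt (rot t P)) := by
    rw [tupleVal_prr_iterate hm]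
    congr 1
    funext j
    rw [hP, periodicExt_rot hp]
  have hperiod (t i : ℕ) : periodicExt (rot t P) (i + m) = periodicExt (rot t P) i + eps c := by
    rw [periodicExt_rot hp, periodicExt_rot hp, ← hP, ← add_assoc, prrSeq_add hm]
  have hc : tupleVal c = binVal (m + 1) (periodicExt P) := by simpa [rot_zero] using hwin 0
  rw [isCycleRep_iff_tupleVal_le, isNecklace_iff_binVal_periodicExt_le P (m + 1)]
  · simp only [hwin, hc]
  · intro t hagree
    refine eq_of_periodicExt_eq (seq_eq_of_add_period hm (eps c) (hperiod t) ?_ fun i hi => ?_)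
    · simpa only [rot_zero] using hperiod 0
    · exact hagree i (by omega)

end NecklaceCriterion

section Tuples

variable {m : ℕ}

noncomputable def prepend (b : F2) (u : Fin m → F2) : Fin (m + 1) → F2 := Fin.cons b u

noncomputable def append (u : Fin m → F2) (b : F2) : Fin (m + 1) → F2 := Fin.snoc u b

lemma get_stTail (c : Fin (m + 1) → F2) {j : ℕ} (hj : j < m) :
    get (stTail c) j = get c (j + 1) := by
  rw [get_of_lt _ hj, get_of_lt _ (by omega)]
  rfl

lemma get_prepend_zero (b : F2) (u : Fin m → F2) : get (prepend b u) 0 = b := by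
  rw [get_of_lt _ (by omega)]
  rfl

lemma get_prepend_succ (b : F2) (u : Fin m → F2) {j : ℕ} (hj : j < m) :
    get (prepend b u) (j + 1) = get u j := by
  rw [get_of_lt _ (by omega), get_of_lt _ hj]
  rfl

lemma stTail_prepend (b : F2) (u : Fin m → F2) : stTail (prepend b u) = u :=
  Fin.tail_cons (α := fun _ => F2) b u

lemma prepend_stTail (c : Fin (m + 1) → F2) : prepend (get c 0) (stTail c) = c := by
  rw [get_of_lt _ (by omega)]
  exact Fin.cons_self_tail c

lemma get_append_of_lt (u : Fin m → F2) (b : F2) {j : ℕ} (hj : j < m) :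
    get (append u b) j = get u j := by
  rw [get_of_lt _ (by omega), get_of_lt _ hj]
  exact Fin.snoc_castSucc (α := fun _ => F2) b u ⟨j, hj⟩

lemma get_append_last (u : Fin m → F2) (b : F2) : get (append u b) m = b := by
  rw [get_of_lt _ (by omega)]
  exact Fin.snoc_last (α := fun _ => F2) b u

lemma init_append (u : Fin m → F2) (b : F2) : Fin.init (append u b) = u :=
  Fin.init_snoc (α := fun _ => F2) b u

lemma get_init (c : Fin (m + 1) → F2) {j : ℕ} (hj : j < m) : get (Fin.init c) j = get c j := by
  rw [get_of_lt _ hj, get_of_lt _ (by omega)]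
  rfl

lemma append_init (c : Fin (m + 1) → F2) : append (Fin.init c) (get c m) = c := by
  rw [get_of_lt _ (by omega)]
  exact Fin.snoc_init_self (α := fun _ => F2) c

lemma tupleVal_append (u : Fin m → F2) (b : F2) :
    tupleVal (append u b) = 2 * tupleVal u + b.val := by
  rw [tupleVal, binVal, get_append_last,
    binVal_congr fun j hj => get_append_of_lt u b hj]
  rfl

lemma tupleVal_prepend_zero (u : Fin m → F2) : tupleVal (prepend 0 u) = tupleVal u := by
  rw [tupleVal, binVal_succ', get_prepend_zero, ZMod.val_zero, zero_mul, zero_add]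
  exact binVal_congr fun j hj => get_prepend_succ 0 u hj

noncomputable def repOf (u : Fin m → F2) : Fin (m + 1) → F2 :=
  append u (get u 0 + get u (m - 1) + 1)

lemma prr_prepend_one (hm : 0 < m) (u : Fin m → F2) : prr (prepend 1 u) = repOf u := by
  refine funext_get fun j hj => ?_
  rcases Nat.lt_succ_iff_lt_or_eq.mp hj with hj | hj
  · rw [prr, get_nextMap_of_lt _ _ (by omega), get_prepend_succ _ _ hj, repOf,
      get_append_of_lt _ _ hj]
  · have hlast : get (prepend 1 u) m = get u (m - 1) := by
      simpa [Nat.sub_add_cancel hm] using get_prepend_succ 1 u (show m - 1 < m by omega)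
    rw [hj, prr, get_nextMap_last, fPRR_eq, repOf, get_append_last, get_prepend_zero, hlast,
      get_prepend_succ _ _ hm]
    grind

lemma tupleVal_lt_tupleVal_repOf (hm : 0 < m) (u : Fin m → F2) :
    tupleVal u < tupleVal (repOf u) := by
  rw [repOf, tupleVal_append]
  by_cases hu : u = 0
  · subst hu
    simp [get_of_lt _ hm, get_of_lt _ (show m - 1 < m by omega), (tupleVal_eq_zero_iff _).mpr]
  · have := (tupleVal_eq_zero_iff u).not.mpr hu
    omega

lemma repOf_injective : Function.Injective (repOf (m := m)) := fun u v h => by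
  rw [← init_append u, ← init_append v]
  exact congrArg Fin.init h

end Tuples

section Necklaces

variable {m : ℕ}

lemma get_rot (r : ℕ) (P : Fin m → F2) {i : ℕ} (hi : i < m) :
    get (rot r P) i = get P ((i + r) % m) := by
  rw [get_of_lt _ hi, get_of_lt _ (Nat.mod_lt _ (by omega))]
  rfl

lemma _root_.IsNecklace.get_last_eq_one {u : Fin m → F2} (hu : IsNecklace u) (hne : u ≠ 0) :
    get u (m - 1) = 1 := by
  have hm : 0 < m := Nat.pos_of_ne_zero fun h => hne (by subst h; exact Subsingleton.elim _ _)
  obtain ⟨k, rfl⟩ : ∃ k, m = k + 1 := ⟨m - 1, by omega⟩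
  have hval : tupleVal u = 2 * binVal k (get u) + (get u k).val := rfl
  have hrot : tupleVal (rot k u) = (get u k).val * 2 ^ k + binVal k (get u) := by
    rw [tupleVal, binVal_succ', get_rot _ _ (by omega), zero_add, Nat.mod_eq_of_lt (by omega)]
    congr 1
    refine binVal_congr fun i hi => ?_
    rw [get_rot _ _ (by omega), show i + 1 + k = i + (k + 1) by omega, Nat.add_mod_right,
      Nat.mod_eq_of_lt (by omega)]
  rcases F2_eq_zero_or_eq_one (get u k) with h | h
  · have hle := (lexLe_iff_tupleVal_le _ _).mp (hu k)
    rw [hval, hrot, h, ZMod.val_zero] at hle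
    have hzero : tupleVal u = 0 := by rw [hval, h, ZMod.val_zero]; omega
    exact absurd ((tupleVal_eq_zero_iff u).mp hzero) hne
  · exact h

lemma get_complAppend_of_lt (u : Fin m → F2) {j : ℕ} (hj : j < m) :
    get (complAppend u) j = get u j := by
  rw [get_of_lt _ (by omega), get_of_lt _ hj]
  exact dif_pos hj

lemma get_complAppend_add (u : Fin m → F2) {j : ℕ} (hj : j < m) :
    get (complAppend u) (j + m) = get u j + 1 := by
  rw [get_of_lt _ (by omega), get_of_lt _ hj]
  simp [complAppend]

lemma periodicExt_complAppend_add (hm : 0 < m) (u : Fin m → F2) (i : ℕ) :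
    periodicExt (complAppend u) (i + m) = periodicExt (complAppend u) i + 1 := by
  simp only [periodicExt]
  have hr := Nat.mod_lt i (show 0 < 2 * m by omega)
  have hmod : (i + m) % (2 * m) = (i % (2 * m) + m) % (2 * m) := by
    rw [Nat.add_mod, Nat.mod_eq_of_lt (show m < 2 * m by omega)]
  rcases lt_or_ge (i % (2 * m)) m with h | h
  · rw [hmod, Nat.mod_eq_of_lt (by omega), get_complAppend_add _ h, get_complAppend_of_lt _ h]
  · obtain ⟨r, hr'⟩ : ∃ r, i % (2 * m) = r + m := ⟨_, (Nat.sub_add_cancel h).symm⟩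
    rw [hmod, hr', add_assoc, ← two_mul, Nat.add_mod_right, Nat.mod_eq_of_lt (by omega),
      get_complAppend_add _ (by omega), get_complAppend_of_lt _ (by omega)]
    grind

lemma isCoNecklace_zero : IsCoNecklace (0 : Fin m → F2) := by
  set W := complAppend (0 : Fin m → F2)
  have hlow : ∀ j < m, get W j = 0 := fun j hj => by
    rw [get_complAppend_of_lt _ hj, get_of_lt _ hj]; rfl
  have hhigh : ∀ j < m, get W (j + m) = 1 := fun j hj => by
    rw [get_complAppend_add _ hj, get_of_lt _ hj]; rfl
  show ∀ r, lexLe W (rot r W)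
  intro r j hagree
  rcases lt_or_ge (j : ℕ) m with hj | hj
  · rw [← get_coe W j, hlow j hj, ZMod.val_zero]
    exact Nat.zero_le _
  -- the rotation agrees with `W` on its first half, which is `0`; this forces `2 * m ∣ r`
  have hzero : ∀ i < m, (i + r) % (2 * m) < m := fun i hi => by
    have h := hagree ⟨i, by omega⟩ (Fin.lt_def.mpr (show i < (j : ℕ) by omega))
    rw [← get_coe W, ← get_coe (rot r W), get_rot _ _ (by omega), hlow i hi] at h
    by_contra hge
    have hlt := Nat.mod_lt (i + r) (show 0 < 2 * m by omega)
    have := hhigh ((i + r) % (2 * m) - m) (by omega)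
    rw [Nat.sub_add_cancel (by omega), ← h] at this
    exact zero_ne_one this
  have h0 := hzero 0 (by omega)
  have h1 := hzero (m - 1) (by omega)
  have hr : r % (2 * m) = 0 := by
    rw [zero_add] at h0
    rw [Nat.add_mod, Nat.mod_eq_of_lt (show m - 1 < 2 * m by omega),
      Nat.mod_eq_of_lt (by omega)] at h1
    omega
  have hrot : rot r W = W := by
    funext i
    simp only [rot, Nat.add_mod, hr, add_zero, Nat.mod_eq_of_lt i.isLt]
  rw [hrot]

lemma _root_.IsCoNecklace.get_last_eq_zero (hm : 0 < m) {u : Fin m → F2}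
    (hu : IsCoNecklace u) : get u (m - 1) = 0 := by
  have hne : complAppend u ≠ 0 := fun h => by
    have h0 := get_complAppend_of_lt u hm
    have h1 := get_complAppend_add u hm
    rw [h, get_zero] at h0 h1
    grind
  have hlast := IsNecklace.get_last_eq_one (m := 2 * m) hu hne
  rw [show 2 * m - 1 = (m - 1) + m by omega, get_complAppend_add _ (by omega)] at hlast
  grind

end Necklaces

section CycleRepresentatives

variable {m : ℕ}

lemma eps_append (hm : 0 < m) (u : Fin m → F2) (b : F2) : eps (append u b) = get u 0 + b := by
  rw [eps, get_append_of_lt _ _ hm, get_append_last]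

lemma prrSeq_eq_periodicExt_init (hm : 0 < m) {c : Fin (m + 1) → F2} (h : eps c = 0) :
    prrSeq c = periodicExt (Fin.init c) := by
  funext i
  rw [prrSeq, h, mul_zero, add_zero, periodicExt, get_init _ (Nat.mod_lt _ hm)]

lemma prrSeq_eq_periodicExt_complAppend (hm : 0 < m) {c : Fin (m + 1) → F2} (h : eps c = 1) :
    prrSeq c = periodicExt (complAppend (Fin.init c)) := by
  refine seq_eq_of_add_period hm 1 (fun i => h ▸ prrSeq_add hm c i)
    (periodicExt_complAppend_add hm _) fun i hi => ?_
  rw [prrSeq_of_le hm c hi.le, periodicExt_of_lt _ (by omega), get_complAppend_of_lt _ hi,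
    get_init _ hi]

lemma isCycleRep_prr_iff_of_eps_eq_zero (hm : 0 < m) {c : Fin (m + 1) → F2} (h : eps c = 0) :
    isCycleRep prr c ↔ IsNecklace (Fin.init c) :=
  isCycleRep_prr_iff hm hm (prrSeq_eq_periodicExt_init hm h)

lemma isCycleRep_prr_iff_of_eps_eq_one (hm : 0 < m) {c : Fin (m + 1) → F2} (h : eps c = 1) :
    isCycleRep prr c ↔ IsCoNecklace (Fin.init c) :=
  isCycleRep_prr_iff hm (by omega) (prrSeq_eq_periodicExt_complAppend hm h)

lemma isCycleRep_repOf (hm : 0 < m) {u : Fin m → F2} (hu : IsNecklace u ∨ IsCoNecklace u) :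
    isCycleRep prr (repOf u) := by
  have heps : eps (repOf u) = get u (m - 1) + 1 := by rw [repOf, eps_append hm]; grind
  rcases F2_eq_zero_or_eq_one (get u (m - 1)) with hlast | hlast
  · rw [isCycleRep_prr_iff_of_eps_eq_one hm (by rw [heps, hlast, zero_add]), repOf,
      init_append]
    rcases hu with hu | hu
    · by_cases hu0 : u = 0
      · exact hu0 ▸ isCoNecklace_zero
      · exact absurd (hu.get_last_eq_one hu0) (by rw [hlast]; decide)
    · exact hu
  · rw [isCycleRep_prr_iff_of_eps_eq_zero hm (by rw [heps, hlast]; decide), repOf, init_append]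
    rcases hu with hu | hu
    · exact hu
    · exact absurd (hu.get_last_eq_zero hm) (by rw [hlast]; decide)

lemma _root_.isCycleRep.eq_zero_or_eq_repOf (hm : 0 < m) {c : Fin (m + 1) → F2}
    (hc : isCycleRep prr c) : c = 0 ∨ ∃ u, (IsNecklace u ∨ IsCoNecklace u) ∧ c = repOf u := by
  set u := Fin.init c
  have hc0 : get c 0 = get u 0 := (get_init c hm).symm
  have hrep : get c m = get u 0 + get u (m - 1) + 1 → c = repOf u := fun h => by
    rw [repOf, ← h, append_init]
  rcases F2_eq_zero_or_eq_one (eps c) with heps | heps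
  · have hu : IsNecklace u := (isCycleRep_prr_iff_of_eps_eq_zero hm heps).mp hc
    have hcm : get c m = get u 0 := by rw [← hc0]; rw [eps] at heps; grind
    by_cases hu0 : u = 0
    · left
      rw [← append_init c, hcm]
      simp only [u] at hu0 ⊢
      rw [hu0, get_zero]
      exact funext_get fun j hj => by
        rcases Nat.lt_succ_iff_lt_or_eq.mp hj with hj | rfl
        · rw [get_append_of_lt _ _ hj, get_zero, get_zero]
        · rw [get_append_last, get_zero]
    · exact Or.inr ⟨u, Or.inl hu, hrep (by rw [hcm, hu.get_last_eq_one hu0]; grind)⟩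
  · have hu : IsCoNecklace u := (isCycleRep_prr_iff_of_eps_eq_one hm heps).mp hc
    refine Or.inr ⟨u, Or.inr hu, hrep ?_⟩
    rw [hu.get_last_eq_zero hm, ← hc0]
    rw [eps] at heps
    grind

end CycleRepresentatives

section JoinMap

variable {m : ℕ}

lemma nextMap_injective {ρ : (Fin (m + 1) → F2) → F2} (g : (Fin m → F2) → F2)
    (hρ : ∀ c, ρ c = get c 0 + g (stTail c)) : Function.Injective (nextMap ρ) := by
  intro a b hab
  have htail : stTail a = stTail b := funext_get fun j hj => by
    rw [get_stTail _ hj, get_stTail _ hj, ← get_nextMap_of_lt ρ a (by omega), hab,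
      get_nextMap_of_lt ρ b (by omega)]
  have hhead : get a 0 = get b 0 := by
    have h := congrArg (fun c => get c m) hab
    simp only [get_nextMap_last, hρ, htail] at h
    exact add_right_cancel h
  rw [← prepend_stTail a, ← prepend_stTail b, hhead, htail]

lemma nextMap_eq_nextMap {ρ ρ' : (Fin (m + 1) → F2) → F2} {a b : Fin (m + 1) → F2}
    (htail : stTail a = stTail b) (hρ : ρ a = ρ' b) : nextMap ρ a = nextMap ρ' b :=
  funext_get fun j hj => by
    rcases Nat.lt_succ_iff_lt_or_eq.mp hj with hj | rfl
    · rw [get_nextMap_of_lt _ _ (by omega), get_nextMap_of_lt _ _ (by omega),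
        ← get_stTail _ hj, ← get_stTail _ hj, htail]
    · rw [get_nextMap_last, get_nextMap_last, hρ]

lemma fPRR_eq_head_add (hm : 0 < m) (c : Fin (m + 1) → F2) :
    fPRR c = get c 0 + (get (stTail c) 0 + get (stTail c) (m - 1)) := by
  rw [fPRR_eq, get_stTail _ hm, get_stTail _ (by omega), Nat.sub_add_cancel hm, add_assoc]

noncomputable def joinMap (W : Finset (Fin m → F2)) : (Fin (m + 1) → F2) → Fin (m + 1) → F2 :=
  nextMap fun c => if stTail c ∈ W then fPRR c + 1 else fPRR c

lemma joinMap_injective (hm : 0 < m) (W : Finset (Fin m → F2)) :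
    Function.Injective (joinMap W) :=
  nextMap_injective (fun u => get u 0 + get u (m - 1) + if u ∈ W then 1 else 0) fun c => by
    rw [fPRR_eq_head_add hm]
    split_ifs <;> ring

lemma joinMap_of_not_mem {W : Finset (Fin m → F2)} {c : Fin (m + 1) → F2}
    (hc : stTail c ∉ W) : joinMap W c = prr c :=
  nextMap_eq_nextMap rfl (if_neg hc)

lemma prr_injective (hm : 0 < m) : Function.Injective (prr (m := m)) := by
  convert joinMap_injective hm ∅ using 1
  funext c
  exact (joinMap_of_not_mem (Finset.notMem_empty _)).symm

lemma joinMap_insert (hm : 0 < m) {W : Finset (Fin m → F2)} {u : Fin m → F2} (hu : u ∉ W) :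
    joinMap (insert u W) = joinMap W ∘ Equiv.swap (prepend 0 u) (prepend 1 u) := by
  have hflip : fPRR (prepend 1 u) = fPRR (prepend 0 u) + 1 := by
    simp only [fPRR_eq_head_add hm, get_prepend_zero, stTail_prepend]
    ring
  funext c
  rw [Function.comp_apply]
  by_cases hc : stTail c = u
  · rw [← prepend_stTail c, hc]
    rcases F2_eq_zero_or_eq_one (get c 0) with h | h <;> rw [h]
    · rw [Equiv.swap_apply_left]
      refine nextMap_eq_nextMap (by rw [stTail_prepend, stTail_prepend]) ?_
      simp only [stTail_prepend, Finset.mem_insert_self, if_true, hu, if_false, hflip]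
    · rw [Equiv.swap_apply_right]
      refine nextMap_eq_nextMap (by rw [stTail_prepend, stTail_prepend]) ?_
      simp only [stTail_prepend, Finset.mem_insert_self, if_true, hu, if_false, hflip]
      grind
  · rw [Equiv.swap_apply_of_ne_of_ne (fun h => hc (by rw [h, stTail_prepend]))
      (fun h => hc (by rw [h, stTail_prepend]))]
    refine nextMap_eq_nextMap rfl ?_
    simp only [Finset.mem_insert, hc, false_or]

end JoinMap

section Key

variable {m : ℕ}

noncomputable def key (c : Fin (m + 1) → F2) : ℕ := sInf (tupleVal '' orbit prr c)

lemma key_le {c d : Fin (m + 1) → F2} (h : inOrbit prr c d) : key c ≤ tupleVal d :=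
  Nat.sInf_le ⟨d, h, rfl⟩

lemma key_le_tupleVal (c : Fin (m + 1) → F2) : key c ≤ tupleVal c := key_le (inOrbit_refl _ c)

lemma key_lt (c : Fin (m + 1) → F2) : key c < 2 ^ (m + 1) :=
  (key_le_tupleVal c).trans_lt (tupleVal_lt c)

lemma exists_tupleVal_eq_key (c : Fin (m + 1) → F2) :
    ∃ d, inOrbit prr c d ∧ tupleVal d = key c :=
  Nat.sInf_mem (⟨_, c, inOrbit_refl _ c, rfl⟩ : (tupleVal '' orbit prr c).Nonempty)

lemma key_eq_of_inOrbit (hm : 0 < m) {c d : Fin (m + 1) → F2} (h : inOrbit prr c d) :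
    key c = key d := by
  have horbit : orbit prr c = orbit prr d := Set.ext fun w =>
    ⟨fun hw => (h.symm (prr_injective hm)).trans hw, fun hw => h.trans hw⟩
  rw [key, key, horbit]

lemma key_eq_tupleVal_of_isCycleRep {d : Fin (m + 1) → F2} (h : isCycleRep prr d) :
    key d = tupleVal d := by
  obtain ⟨w, hw, hkey⟩ := exists_tupleVal_eq_key d
  exact (key_le_tupleVal d).antisymm (hkey ▸ (lexLe_iff_tupleVal_le _ _).mp (h w hw))

lemma exists_isCycleRep_inOrbit (hm : 0 < m) (c : Fin (m + 1) → F2) :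
    ∃ d, inOrbit prr d c ∧ isCycleRep prr d ∧ tupleVal d = key c := by
  obtain ⟨d, hd, hkey⟩ := exists_tupleVal_eq_key c
  refine ⟨d, hd.symm (prr_injective hm), (isCycleRep_iff_tupleVal_le _ _).mpr fun t => ?_, hkey⟩
  rw [hkey]
  exact key_le (hd.trans ⟨t, rfl⟩)

lemma key_prepend_one (hm : 0 < m) {u : Fin m → F2} (hu : IsNecklace u ∨ IsCoNecklace u) :
    key (prepend 1 u) = tupleVal (repOf u) := by
  rw [key_eq_of_inOrbit hm (inOrbit_apply prr _), prr_prepend_one hm,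
    key_eq_tupleVal_of_isCycleRep (isCycleRep_repOf hm hu)]

lemma key_prepend_zero_lt (hm : 0 < m) (u : Fin m → F2) :
    key (prepend 0 u) < tupleVal (repOf u) :=
  (key_le_tupleVal _).trans_lt (tupleVal_prepend_zero u ▸ tupleVal_lt_tupleVal_repOf hm u)

end Key

section Joining

variable {m : ℕ}

noncomputable def necklaceSet (m : ℕ) : Finset (Fin m → F2) :=
  Finset.univ.filter fun u => IsNecklace u ∨ IsCoNecklace u

lemma mem_necklaceSet {u : Fin m → F2} : u ∈ necklaceSet m ↔ IsNecklace u ∨ IsCoNecklace u := by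
  simp [necklaceSet]

noncomputable def joined (m K : ℕ) : Finset (Fin m → F2) :=
  (necklaceSet m).filter fun u => tupleVal (repOf u) < K

lemma joined_succ_of_eq {K : ℕ} {u : Fin m → F2} (hu : u ∈ necklaceSet m)
    (huK : tupleVal (repOf u) = K) : joined m (K + 1) = insert u (joined m K) := by
  ext v
  simp only [joined, Finset.mem_filter, Finset.mem_insert]
  constructor
  · rintro ⟨hv, hvK⟩
    rcases Nat.lt_succ_iff_lt_or_eq.mp hvK with hvK | hvK
    · exact Or.inr ⟨hv, hvK⟩
    · exact Or.inl (repOf_injective (tupleVal_injective (hvK.trans huK.symm)))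
  · rintro (rfl | ⟨hv, hvK⟩)
    · exact ⟨hu, by omega⟩
    · exact ⟨hv, by omega⟩

lemma joined_succ_of_forall_ne {K : ℕ} (h : ∀ u ∈ necklaceSet m, tupleVal (repOf u) ≠ K) :
    joined m (K + 1) = joined m K :=
  Finset.filter_congr fun u hu => by have := h u hu; omega

lemma joined_two_pow : joined m (2 ^ (m + 1)) = necklaceSet m :=
  Finset.filter_true_of_mem fun u _ => tupleVal_lt (repOf u)

lemma eqOn_joinMap_joined (hm : 0 < m) (K : ℕ) :
    Set.EqOn prr (joinMap (joined m K)) {c : Fin (m + 1) → F2 | key c = K} := by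
  intro c hc
  refine (joinMap_of_not_mem fun hmem => ?_).symm
  rw [joined, Finset.mem_filter, mem_necklaceSet] at hmem
  obtain ⟨hu, hK⟩ := hmem
  have hc' := prepend_stTail c
  rcases F2_eq_zero_or_eq_one (get c 0) with h | h <;> rw [h] at hc'
  · have := key_prepend_zero_lt hm (stTail c)
    rw [hc', hc] at this
    omega
  · have := key_prepend_one hm hu
    rw [hc', hc] at this
    omega

lemma mapsTo_prr_key (hm : 0 < m) (K : ℕ) :
    Set.MapsTo prr {c : Fin (m + 1) → F2 | key c = K} {c | key c = K} :=
  fun c hc => (key_eq_of_inOrbit hm (inOrbit_apply prr c)).symm.trans hc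

lemma exists_zero_or_repOf_inOrbit (hm : 0 < m) (z : Fin (m + 1) → F2) :
    ∃ d, inOrbit prr d z ∧ tupleVal d = key z ∧ (d = 0 ∨ ∃ u ∈ necklaceSet m, d = repOf u) := by
  obtain ⟨d, hdz, hd, hkey⟩ := exists_isCycleRep_inOrbit hm z
  refine ⟨d, hdz, hkey, ?_⟩
  simpa only [mem_necklaceSet] using hd.eq_zero_or_eq_repOf hm

lemma inOrbit_joinMap_succ_of_eq (hm : 0 < m) {K : ℕ} {u : Fin m → F2}
    (hu : u ∈ necklaceSet m) (huK : tupleVal (repOf u) = K)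
    (ih : ∀ z, key z < K → inOrbit (joinMap (joined m K)) 0 z) :
    ∀ z, key z < K + 1 → inOrbit (joinMap (joined m (K + 1))) 0 z := by
  set f := joinMap (joined m K)
  have hinj := joinMap_injective hm (joined m K)
  have hy : prepend 1 u ∈ {c | key c = K} :=
    (key_prepend_one hm (mem_necklaceSet.mp hu)).trans huK
  have hx : inOrbit f 0 (prepend 0 u) := ih _ (huK ▸ key_prepend_zero_lt hm u)
  have hxy : ¬ inOrbit f (prepend 0 u) (prepend 1 u) := fun h => by
    have : prepend 0 u ∈ {c : Fin (m + 1) → F2 | key c = K} :=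
      mem_of_inOrbit_of_eqOn (mapsTo_prr_key hm K) (eqOn_joinMap_joined hm K) hy (h.symm hinj)
    exact (key_prepend_zero_lt hm u).ne (this.trans huK.symm)
  rw [joined_succ_of_eq hu huK, joinMap_insert hm (by simp [joined, huK])]
  intro z hz
  rcases Nat.lt_succ_iff_lt_or_eq.mp hz with hz | hz
  · exact inOrbit_comp_swap_of_inOrbit hinj hxy (ih z hz)
  obtain ⟨d, hdz, hdK, hd⟩ := exists_zero_or_repOf_inOrbit hm z
  obtain rfl : d = repOf u := by
    rcases hd with rfl | ⟨v, -, rfl⟩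
    · have := tupleVal_lt_tupleVal_repOf hm u
      rw [(tupleVal_eq_zero_iff 0).mpr rfl] at hdK
      omega
    · rw [repOf_injective (tupleVal_injective (hdK.trans (hz.trans huK.symm)))]
  have hyz : inOrbit prr (prepend 1 u) z :=
    (inOrbit_apply prr _).trans (prr_prepend_one hm u ▸ hdz)
  have hyz' := inOrbit_of_eqOn (mapsTo_prr_key hm K) (eqOn_joinMap_joined hm K) hy hyz
  exact (inOrbit_comp_swap_of_inOrbit hinj hxy hx).trans <|
    (inOrbit_comp_swap_self hinj hxy).trans (inOrbit_comp_swap_of_inOrbit hinj hxy hyz')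

lemma inOrbit_joinMap_succ_of_forall_ne (hm : 0 < m) {K : ℕ}
    (hK : ∀ u ∈ necklaceSet m, tupleVal (repOf u) ≠ K)
    (ih : ∀ z, key z < K → inOrbit (joinMap (joined m K)) 0 z) :
    ∀ z, key z < K + 1 → inOrbit (joinMap (joined m (K + 1))) 0 z := by
  rw [joined_succ_of_forall_ne hK]
  intro z hz
  rcases Nat.lt_succ_iff_lt_or_eq.mp hz with hz | hz
  · exact ih z hz
  obtain ⟨d, hdz, hdK, hd⟩ := exists_zero_or_repOf_inOrbit hm z
  rcases hd with rfl | ⟨v, hv, rfl⟩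
  · exact inOrbit_of_eqOn (mapsTo_prr_key hm K) (eqOn_joinMap_joined hm K)
      ((key_eq_of_inOrbit hm hdz).trans hz) hdz
  · exact absurd (hdK.trans hz) (hK v hv)

lemma inOrbit_joinMap_joined (hm : 0 < m) (K : ℕ) :
    ∀ z, key z < K → inOrbit (joinMap (joined m K)) 0 z := by
  induction K with
  | zero => intro z hz; omega
  | succ K ih =>
    by_cases hK : ∃ u ∈ necklaceSet m, tupleVal (repOf u) = K
    · obtain ⟨u, hu, huK⟩ := hK
      exact inOrbit_joinMap_succ_of_eq hm hu huK ih
    · push Not at hK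
      exact inOrbit_joinMap_succ_of_forall_ne hm hK ih

lemma inOrbit_joinMap_necklaceSet (hm : 0 < m) (x y : Fin (m + 1) → F2) :
    inOrbit (joinMap (necklaceSet m)) x y := by
  have h : ∀ z, inOrbit (joinMap (necklaceSet m)) 0 z := fun z =>
    joined_two_pow (m := m) ▸ inOrbit_joinMap_joined hm _ z (key_lt z)
  exact ((h x).symm (joinMap_injective hm _)).trans (h y)

end Joining

end Sala

/-- Sala's successor rule `ς` generates a de Bruijn sequence of order `n`. -/
theorem sala_rule_generates (n : ℕ) (hn : 3 ≤ n) :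
    generatesDB (fun c : Fin n → F2 =>
      if IsNecklace (stTail c) ∨ IsCoNecklace (stTail c)
      then get c 0 + get c 1 + get c (n - 1) + 1
      else get c 0 + get c 1 + get c (n - 1)) := by
  obtain ⟨m, rfl⟩ : ∃ m, n = m + 1 := ⟨n - 1, by omega⟩
  have hrule : nextMap (fun c : Fin (m + 1) → F2 =>
      if IsNecklace (stTail c) ∨ IsCoNecklace (stTail c)
      then get c 0 + get c 1 + get c (m + 1 - 1) + 1
      else get c 0 + get c 1 + get c (m + 1 - 1)) = Sala.joinMap (Sala.necklaceSet m) := by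
    unfold Sala.joinMap
    congr 1
    funext c
    by_cases h : IsNecklace (stTail c) ∨ IsCoNecklace (stTail c) <;>
      simp only [h, Sala.mem_necklaceSet, if_true, if_false] <;> rfl
  intro x y
  rw [hrule]
  exact Sala.inOrbit_joinMap_necklaceSet (by omega) x y
end

section
/- Let n ≥ 3 and let w = (w_0,…,w_{n-2}) ∈ F₂^{n-1}. Then: (a) w is a necklace if and only if the n-tuple (w_0,…,w_{n-2}, w_0) is the cycle representative (lexicographically least state) of its orbit under σ_PRR; (b) w is a co-necklace if and only if the n-tuple (w_0,…,w_{n-2}, w_0+1) is the cycle representative of its orbit under σ_PRR. -/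
attribute [local instance] Classical.propDecidable

/-- `(w_0,…,w_{n-2}, w_0)`. -/
noncomputable def extendEq {n : ℕ} (w : Fin (n - 1) → F2) : Fin n → F2 :=
  fun i => if h : (i : ℕ) < n - 1 then w ⟨(i : ℕ), h⟩ else get w 0

/-- `(w_0,…,w_{n-2}, w_0 + 1)`. -/
noncomputable def extendNe {n : ℕ} (w : Fin (n - 1) → F2) : Fin n → F2 :=
  fun i => if h : (i : ℕ) < n - 1 then w ⟨(i : ℕ), h⟩ else get w 0 + 1

/-! ### Auxiliary lemmas -/

section Aux

variable {m n : ℕ}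

lemma get_lt {c : Fin n → F2} {j : ℕ} (h : j < n) : get c j = c ⟨j, h⟩ := dif_pos h

lemma lexLe_of_eq {v w : Fin m → F2} (h : v = w) : lexLe v w := by
  subst h; intro j _; exact le_refl _

lemma rot_apply (r : ℕ) (w : Fin m → F2) (i : Fin m) :
    rot r w i = w ⟨((i : ℕ) + r) % m, Nat.mod_lt _ i.pos⟩ := rfl

lemma extendEq_lt (w : Fin (n-1) → F2) (i : Fin n) (h : (i:ℕ) < n - 1) :
    extendEq (n := n) w i = w ⟨(i:ℕ), h⟩ := dif_pos h

lemma extendEq_last (w : Fin (n-1) → F2) (i : Fin n) (h : ¬ (i:ℕ) < n - 1) :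
    extendEq (n := n) w i = get w 0 := dif_neg h

lemma extendNe_lt (w : Fin (n-1) → F2) (i : Fin n) (h : (i:ℕ) < n - 1) :
    extendNe (n := n) w i = w ⟨(i:ℕ), h⟩ := dif_pos h

lemma extendNe_last (w : Fin (n-1) → F2) (i : Fin n) (h : ¬ (i:ℕ) < n - 1) :
    extendNe (n := n) w i = get w 0 + 1 := dif_neg h

lemma nextMap_lt (ρ : (Fin n → F2) → F2) (c : Fin n → F2) (i : Fin n) (h : (i:ℕ) + 1 < n) :
    nextMap ρ c i = c ⟨(i:ℕ)+1, h⟩ := dif_pos h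

lemma nextMap_last (ρ : (Fin n → F2) → F2) (c : Fin n → F2) (i : Fin n) (h : ¬ (i:ℕ) + 1 < n) :
    nextMap ρ c i = ρ c := dif_neg h

lemma rot_zero (w : Fin m → F2) : rot 0 w = w := by
  funext i
  rw [rot_apply]
  exact congrArg w (Fin.ext (by simp [Nat.mod_eq_of_lt i.isLt]))

lemma rot_rot (r s : ℕ) (w : Fin m → F2) : rot r (rot s w) = rot (s + r) w := by
  funext i
  rw [rot_apply, rot_apply, rot_apply]
  apply congrArg w
  apply Fin.ext
  show (((i : ℕ) + r) % m + s) % m = ((i : ℕ) + (s + r)) % m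
  rw [Nat.mod_add_mod]
  congr 1
  omega

lemma two_eq_zero (a b : F2) : a + b + a = b := by revert a b; decide

/-- Lex comparison of extensions by a last symbol determined from the word. -/
lemma extend_lex (hn : 3 ≤ n) (g : (Fin (n-1) → F2) → F2) (v v' : Fin (n-1) → F2) :
    lexLe (fun i : Fin n => if h : (i:ℕ) < n-1 then v ⟨i,h⟩ else g v)
      (fun i : Fin n => if h : (i:ℕ) < n-1 then v' ⟨i,h⟩ else g v') ↔ lexLe v v' := by
  constructor
  · intro h j hpre
    have hj : (j:ℕ) < n - 1 := j.isLt
    have H := h ⟨(j:ℕ), by omega⟩ (fun i hi => by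
      have hi' : (i : ℕ) < n - 1 := by
        have : (i : ℕ) < (j : ℕ) := hi
        omega
      show (if h : (i:ℕ) < n-1 then v ⟨i,h⟩ else g v)
          = (if h : (i:ℕ) < n-1 then v' ⟨i,h⟩ else g v')
      rw [dif_pos hi', dif_pos hi']
      exact hpre ⟨(i:ℕ), hi'⟩ (by simpa [Fin.lt_def] using hi))
    simpa only [dif_pos hj] using H
  · intro h j hpre
    by_cases hj : (j:ℕ) < n - 1
    · simp only [dif_pos hj]
      have H := h ⟨(j:ℕ), hj⟩ (fun i hi => by
        have hi' : (i : ℕ) < (j : ℕ) := hi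
        have := hpre ⟨(i:ℕ), by omega⟩ (by simpa [Fin.lt_def] using hi')
        simpa only [dif_pos i.isLt] using this)
      exact H
    · have hv : v = v' := by
        funext i
        have := hpre ⟨(i:ℕ), by have := i.isLt; omega⟩
          (by simp [Fin.lt_def]; have := i.isLt; omega)
        simpa only [dif_pos i.isLt] using this
      subst hv
      simp only [dif_neg hj]
      exact le_refl _

/-- σ_PRR on a PCR-type state. -/
lemma next_extendEq (hn : 3 ≤ n) (w : Fin (n-1) → F2) :
    nextMap (n := n) fPRR (extendEq w) = extendEq (rot 1 w) := by
  funext i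
  by_cases h1 : (i:ℕ) + 1 < n
  · rw [nextMap_lt _ _ _ h1]
    by_cases h2 : (i:ℕ) + 1 < n - 1
    · rw [extendEq_lt _ _ h2, extendEq_lt _ i (show (i:ℕ) < n-1 by omega), rot_apply]
      exact congrArg w (Fin.ext (show (i:ℕ)+1 = ((i:ℕ)+1) % (n-1) from (Nat.mod_eq_of_lt (by omega)).symm))
    · rw [extendEq_last _ _ (by simpa using h2), extendEq_lt _ i (show (i:ℕ) < n-1 by omega),
        rot_apply, get_lt (show 0 < n - 1 by omega)]
      exact congrArg w (Fin.ext (by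
        show (0:ℕ) = ((i:ℕ)+1) % (n-1)
        have : (i:ℕ) + 1 = n - 1 := by omega
        rw [this, Nat.mod_self]))
  · have hi : ¬ (i:ℕ) < n - 1 := by have := i.isLt; omega
    rw [nextMap_last _ _ _ h1, extendEq_last _ _ hi]
    show fPRR (extendEq w) = get (rot 1 w) 0
    rw [fPRR, get_lt (show 0 < n by omega), get_lt (show 1 < n by omega),
      get_lt (show n - 1 < n by omega), get_lt (show 0 < n - 1 by omega),
      extendEq_lt _ _ (show ((⟨0, by omega⟩ : Fin n):ℕ) < n - 1 by simpa using by omega),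
      extendEq_lt _ _ (show ((⟨1, by omega⟩ : Fin n):ℕ) < n - 1 by simpa using by omega),
      extendEq_last _ _ (show ¬ ((⟨n-1, by omega⟩ : Fin n):ℕ) < n - 1 by simp),
      get_lt (show 0 < n - 1 by omega), rot_apply]
    have e2 : (⟨(((⟨0, by omega⟩ : Fin (n-1)):ℕ) + 1) % (n-1), Nat.mod_lt _ (by omega)⟩ : Fin (n-1)) = ⟨1, by omega⟩ := by
      apply Fin.ext
      show ((0:ℕ) + 1) % (n-1) = 1
      rw [Nat.mod_eq_of_lt (by omega)]
    rw [e2]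
    apply two_eq_zero

end Aux

section Aux2

variable {m n : ℕ}

lemma add11 (a : F2) : a + 1 + 1 = a := by revert a; decide

lemma feedNe (a b : F2) : a + b + (a + 1) = b + 1 := by revert a b; decide

/-- Restriction of a `2m`-tuple to its first `m` coordinates. -/
def restr {m : ℕ} (u : Fin (2*m) → F2) : Fin m → F2 :=
  fun i => u ⟨(i:ℕ), by have := i.isLt; omega⟩

/-- The `m`-window of `complAppend w` starting at position `k`. -/
noncomputable def window {m : ℕ} (k : ℕ) (w : Fin m → F2) : Fin m → F2 :=
  fun i => complAppend w ⟨((i:ℕ) + k) % (2*m), Nat.mod_lt _ (by have := i.pos; omega)⟩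

/-- The complementing cyclic shift. -/
noncomputable def ccr {m : ℕ} (v : Fin m → F2) : Fin m → F2 :=
  fun i => if h : (i:ℕ) + 1 < m then v ⟨(i:ℕ)+1, h⟩ else v ⟨0, i.pos⟩ + 1

/-- Anti-periodicity: the second half is the complement of the first. -/
def AntiP {m : ℕ} (u : Fin (2*m) → F2) : Prop :=
  ∀ j : ℕ, (h : j < 2*m) → u ⟨(j+m) % (2*m), Nat.mod_lt _ (by omega)⟩ = u ⟨j, h⟩ + 1

lemma complAppend_lt (w : Fin m → F2) (i : Fin (2*m)) (h : (i:ℕ) < m) :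
    complAppend w i = w ⟨(i:ℕ), h⟩ := dif_pos h

lemma complAppend_ge (w : Fin m → F2) (i : Fin (2*m)) (h : ¬ (i:ℕ) < m) :
    complAppend w i = w ⟨(i:ℕ) - m, by have := i.isLt; omega⟩ + 1 := dif_neg h

lemma antiP_complAppend (w : Fin m → F2) : AntiP (complAppend w) := by
  intro j h
  by_cases hj : j < m
  · have e : (j + m) % (2*m) = j + m := Nat.mod_eq_of_lt (by omega)
    rw [show (⟨(j+m) % (2*m), Nat.mod_lt _ (by omega)⟩ : Fin (2*m))
        = ⟨j+m, by omega⟩ from Fin.ext e]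
    rw [complAppend_ge w _ (by show ¬ j + m < m; omega), complAppend_lt w _ (by simpa using hj)]
    exact congrArg (· + 1) (congrArg w (Fin.ext (by show j + m - m = j; omega)))
  · have e : (j + m) % (2*m) = j - m := by
      rw [Nat.mod_eq_sub_mod (by omega), show j + m - 2*m = j - m by omega,
        Nat.mod_eq_of_lt (by omega)]
    rw [show (⟨(j+m) % (2*m), Nat.mod_lt _ (by omega)⟩ : Fin (2*m))
        = ⟨j - m, by omega⟩ from Fin.ext e]
    rw [complAppend_lt w _ (by show j - m < m; omega), complAppend_ge w _ (by simpa using hj)]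
    rw [add11]

lemma antiP_rot (u : Fin (2*m) → F2) (hu : AntiP u) (r : ℕ) : AntiP (rot r u) := by
  intro j h
  rw [rot_apply, rot_apply]
  have e : (((j+m) % (2*m)) + r) % (2*m) = (((j+r) % (2*m)) + m) % (2*m) := by
    rw [Nat.mod_add_mod, Nat.mod_add_mod]
    congr 1
    omega
  calc u ⟨(((j+m) % (2*m)) + r) % (2*m), Nat.mod_lt _ (by omega)⟩
      = u ⟨(((j+r) % (2*m)) + m) % (2*m), Nat.mod_lt _ (by omega)⟩ := congrArg u (Fin.ext e)
    _ = u ⟨(j+r) % (2*m), Nat.mod_lt _ (by omega)⟩ + 1 := hu _ (Nat.mod_lt _ (by omega))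

end Aux2

section Aux3

variable {m n : ℕ}

lemma antiP_ext {u u' : Fin (2*m) → F2} (hu : AntiP u) (hu' : AntiP u')
    (h : restr u = restr u') : u = u' := by
  have hr : ∀ j : ℕ, (hj : j < m) → u ⟨j, by omega⟩ = u' ⟨j, by omega⟩ := fun j hj =>
    congrFun h (⟨j, hj⟩ : Fin m)
  funext j
  by_cases hj : (j:ℕ) < m
  · have := hr (j:ℕ) hj
    calc u j = u ⟨(j:ℕ), by omega⟩ := congrArg u (Fin.ext rfl)
      _ = u' ⟨(j:ℕ), by omega⟩ := this
      _ = u' j := congrArg u' (Fin.ext rfl)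
  · have hj2 := j.isLt
    have e : ((j:ℕ) - m + m) % (2*m) = (j:ℕ) := by
      rw [Nat.mod_eq_of_lt (by omega)]; omega
    calc u j = u ⟨((j:ℕ) - m + m) % (2*m), Nat.mod_lt _ (by omega)⟩ :=
          (congrArg u (Fin.ext e)).symm
      _ = u ⟨(j:ℕ) - m, by omega⟩ + 1 := hu _ (by omega)
      _ = u' ⟨(j:ℕ) - m, by omega⟩ + 1 := by rw [hr ((j:ℕ) - m) (by omega)]
      _ = u' ⟨((j:ℕ) - m + m) % (2*m), Nat.mod_lt _ (by omega)⟩ := (hu' _ (by omega)).symm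
      _ = u' j := congrArg u' (Fin.ext e)

lemma lexLe_restr {u u' : Fin (2*m) → F2} (h : lexLe u u') : lexLe (restr u) (restr u') := by
  intro j hpre
  have H := h ⟨(j:ℕ), by have := j.isLt; omega⟩ (fun i hi => by
    have hi' : (i:ℕ) < (j:ℕ) := hi
    have him : (i:ℕ) < m := by have := j.isLt; omega
    have := hpre ⟨(i:ℕ), him⟩ (by simpa [Fin.lt_def] using hi')
    calc u i = u ⟨(i:ℕ), by have := j.isLt; omega⟩ := congrArg u (Fin.ext rfl)
      _ = u' ⟨(i:ℕ), by have := j.isLt; omega⟩ := this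
      _ = u' i := congrArg u' (Fin.ext rfl))
  exact H

lemma lexLe_lift {u u' : Fin (2*m) → F2} (hu : AntiP u) (hu' : AntiP u')
    (h : lexLe (restr u) (restr u')) : lexLe u u' := by
  intro j hpre
  by_cases hj : (j:ℕ) < m
  · have H := h ⟨(j:ℕ), hj⟩ (fun i hi => by
      have hi' : (i:ℕ) < (j:ℕ) := hi
      have := hpre ⟨(i:ℕ), by have := j.isLt; omega⟩ (by simpa [Fin.lt_def] using hi')
      exact this)
    exact H
  · have hr : restr u = restr u' := by
      funext i
      exact hpre ⟨(i:ℕ), by have := i.isLt; omega⟩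
        (by simp only [Fin.lt_def]; show (i:ℕ) < (j:ℕ); have := i.isLt; omega)
    rw [antiP_ext hu hu' hr]

lemma restr_complAppend (w : Fin m → F2) : restr (complAppend w) = w := by
  funext i
  show complAppend w ⟨(i:ℕ), _⟩ = w i
  rw [complAppend_lt w _ (by show (i:ℕ) < m; exact i.isLt)]

lemma restr_rot_complAppend (r : ℕ) (w : Fin m → F2) :
    restr (rot r (complAppend w)) = window r w := by
  funext i
  show complAppend w ⟨((i:ℕ) + r) % (2*m), _⟩ = complAppend w ⟨((i:ℕ) + r) % (2*m), _⟩
  exact congrArg (complAppend w) (Fin.ext rfl)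

lemma window_zero (w : Fin m → F2) : window 0 w = w := by
  funext i
  show complAppend w ⟨((i:ℕ) + 0) % (2*m), _⟩ = w i
  rw [show (⟨((i:ℕ) + 0) % (2*m), Nat.mod_lt _ (by have := i.pos; omega)⟩ : Fin (2*m))
      = ⟨(i:ℕ), by have := i.isLt; omega⟩ from
    Fin.ext (by show ((i:ℕ)+0) % (2*m) = (i:ℕ); rw [Nat.add_zero, Nat.mod_eq_of_lt (by have := i.isLt; omega)])]
  rw [complAppend_lt w _ (by show (i:ℕ) < m; exact i.isLt)]

lemma ccr_window (k : ℕ) (w : Fin m → F2) : ccr (window k w) = window (k+1) w := by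
  funext i
  by_cases h : (i:ℕ) + 1 < m
  · rw [show ccr (window k w) i = window k w ⟨(i:ℕ)+1, h⟩ from dif_pos h]
    show complAppend w _ = complAppend w _
    exact congrArg (complAppend w) (Fin.ext (by
      show ((i:ℕ)+1+k) % (2*m) = ((i:ℕ)+(k+1)) % (2*m); congr 1; omega))
  · rw [show ccr (window k w) i = window k w ⟨0, i.pos⟩ + 1 from dif_neg h]
    show complAppend w ⟨(0+k) % (2*m), _⟩ + 1 = complAppend w ⟨((i:ℕ)+(k+1)) % (2*m), _⟩
    have hi : (i:ℕ) + 1 = m := by have := i.isLt; omega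
    have e : ((k % (2*m)) + m) % (2*m) = ((i:ℕ)+(k+1)) % (2*m) := by
      rw [Nat.mod_add_mod]; congr 1; omega
    calc complAppend w ⟨(0+k) % (2*m), Nat.mod_lt _ (by have := i.pos; omega)⟩ + 1
        = complAppend w ⟨k % (2*m), Nat.mod_lt _ (by have := i.pos; omega)⟩ + 1 := by
          exact congrArg (· + 1) (congrArg (complAppend w) (Fin.ext (by show (0+k) % (2*m) = k % (2*m); congr 1; omega)))
      _ = complAppend w ⟨((k % (2*m)) + m) % (2*m), Nat.mod_lt _ (by have := i.pos; omega)⟩ := by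
          rw [antiP_complAppend w (k % (2*m)) (Nat.mod_lt _ (by have := i.pos; omega))]
      _ = complAppend w ⟨((i:ℕ)+(k+1)) % (2*m), Nat.mod_lt _ (by have := i.pos; omega)⟩ :=
          congrArg (complAppend w) (Fin.ext e)

/-- σ_PRR on a CCR-type state. -/
lemma next_extendNe (hn : 3 ≤ n) (v : Fin (n-1) → F2) :
    nextMap (n := n) fPRR (extendNe v) = extendNe (ccr v) := by
  funext i
  by_cases h1 : (i:ℕ) + 1 < n
  · rw [nextMap_lt _ _ _ h1]
    by_cases h2 : (i:ℕ) + 1 < n - 1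
    · rw [extendNe_lt _ _ h2, extendNe_lt _ i (show (i:ℕ) < n-1 by omega)]
      rw [show ccr v ⟨(i:ℕ), by omega⟩ = v ⟨(i:ℕ)+1, by simpa using h2⟩ from dif_pos (by simpa using h2)]
    · rw [extendNe_last _ _ (by simpa using h2), extendNe_lt _ i (show (i:ℕ) < n-1 by omega)]
      rw [show ccr v ⟨(i:ℕ), by omega⟩ = v ⟨0, by omega⟩ + 1 from dif_neg (by simpa using h2)]
      rw [get_lt (show 0 < n - 1 by omega)]
  · have hi : ¬ (i:ℕ) < n - 1 := by have := i.isLt; omega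
    rw [nextMap_last _ _ _ h1, extendNe_last _ _ hi]
    show fPRR (extendNe v) = get (ccr v) 0 + 1
    rw [fPRR, get_lt (show 0 < n by omega), get_lt (show 1 < n by omega),
      get_lt (show n - 1 < n by omega), get_lt (show 0 < n - 1 by omega),
      extendNe_lt _ _ (show ((⟨0, by omega⟩ : Fin n):ℕ) < n - 1 by show (0:ℕ) < n-1; omega),
      extendNe_lt _ _ (show ((⟨1, by omega⟩ : Fin n):ℕ) < n - 1 by show (1:ℕ) < n-1; omega),
      extendNe_last _ _ (show ¬ ((⟨n-1, by omega⟩ : Fin n):ℕ) < n - 1 by simp),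
      get_lt (show 0 < n - 1 by omega)]
    rw [show ccr v ⟨0, by omega⟩ = v ⟨(0:ℕ)+1, by omega⟩ from dif_pos (by show (0:ℕ)+1 < n-1; omega)]
    rw [show (⟨(0:ℕ)+1, by omega⟩ : Fin (n-1)) = ⟨1, by omega⟩ from Fin.ext rfl]
    exact feedNe _ _

lemma iter_extendEq (hn : 3 ≤ n) (w : Fin (n-1) → F2) (k : ℕ) :
    (nextMap (n := n) fPRR)^[k] (extendEq w) = extendEq (rot k w) := by
  induction k with
  | zero => rw [Function.iterate_zero_apply, rot_zero]
  | succ k ih =>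
      rw [Function.iterate_succ_apply', ih, next_extendEq hn, rot_rot]

lemma iter_extendNe (hn : 3 ≤ n) (w : Fin (n-1) → F2) (k : ℕ) :
    (nextMap (n := n) fPRR)^[k] (extendNe w) = extendNe (window k w) := by
  induction k with
  | zero => rw [Function.iterate_zero_apply, window_zero]
  | succ k ih =>
      rw [Function.iterate_succ_apply', ih, next_extendNe hn, ccr_window]

lemma extendEq_lex (hn : 3 ≤ n) (v v' : Fin (n-1) → F2) :
    lexLe (extendEq (n := n) v) (extendEq v') ↔ lexLe v v' :=
  extend_lex hn (fun u => get u 0) v v'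

lemma extendNe_lex (hn : 3 ≤ n) (v v' : Fin (n-1) → F2) :
    lexLe (extendNe (n := n) v) (extendNe v') ↔ lexLe v v' :=
  extend_lex hn (fun u => get u 0 + 1) v v'

end Aux3

/-- necklaces and co-necklaces of order `n-1` correspond exactly to the
cycle representatives of the PCR-type and CCR-type cycles of the PRR of order `n`. -/
theorem necklace_iff_cycle_rep (n : ℕ) (hn : 3 ≤ n) (w : Fin (n - 1) → F2) :
    (IsNecklace w ↔ isCycleRep (nextMap (n := n) fPRR) (extendEq w)) ∧
    (IsCoNecklace w ↔ isCycleRep (nextMap (n := n) fPRR) (extendNe w)) := by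
  constructor
  · constructor
    · intro h v hv
      obtain ⟨k, hk⟩ := hv
      rw [← hk, iter_extendEq hn]
      exact (extendEq_lex hn w (rot k w)).mpr (h k)
    · intro h r
      exact (extendEq_lex hn w (rot r w)).mp (h _ ⟨r, iter_extendEq hn w r⟩)
  · constructor
    · intro h v hv
      obtain ⟨k, hk⟩ := hv
      rw [← hk, iter_extendNe hn]
      apply (extendNe_lex hn w (window k w)).mpr
      have H := lexLe_restr (h k)
      rwa [restr_complAppend, restr_rot_complAppend] at H
    · intro h r
      have H : lexLe w (window r w) :=
        (extendNe_lex hn w (window r w)).mp (h _ ⟨r, iter_extendNe hn w r⟩)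
      apply lexLe_lift (antiP_complAppend w) (antiP_rot _ (antiP_complAppend w) r)
      rwa [restr_complAppend, restr_rot_complAppend]
end

section
/- Let n ≥ 3. Every PCR-type cycle P of the PRR of order n other than the cycle {(0,…,0)} contains at least one state whose first and last coordinates are both 1; choose one such state sel(P) in each such cycle. Let A = { c ∈ F₂ⁿ : putting v = (c_1,…,c_{n-1},1), either (c_1 = 0 and v is the cycle representative of the (CCR-type) cycle containing v), or (c_1 = 1 and v = sel(P), where P is the (PCR-type) cycle containing v) }. Then, for every such choice of the states sel(P), the successor rule Ψ defined by Ψ(c) = c_0 + c_1 + c_{n-1} + 1 if c ∈ A and Ψ(c) = c_0 + c_1 + c_{n-1} otherwise generates a de Bruijn sequence of order n. -/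
attribute [local instance] Classical.propDecidable

/-!
Ψ is obtained from the PRR by cycle joining. Every nonzero PRR cycle `C` contains exactly one
state `v_C ∈ joinStates sel` (its representative if `C` is CCR-type, `sel C` if it is PCR-type),
and the two states `c` with `shiftIn c 1 = v_C` are the predecessors of `v_C` and of its
companion `compSt v_C`. Ψ exchanges these two successors, so its state map is the PRR map followed
by the disjoint transpositions `(v_C, compSt v_C)`. The companion lies on a cycle whose least state
is lexicographically smaller than that of `C`, hence the transpositions join the cycles along a tree
rooted at the fixed point `0` and the result is a single cycle.
-/

theorem F2.eq_one_of_ne_zero {a : F2} (h : a ≠ 0) : a = 1 := by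
  revert a
  decide

theorem F2.add_eq_one_of_ne {a b : F2} (h : a ≠ b) : a + b = 1 := by
  revert a b
  decide

open Equiv Function

namespace Equiv.Perm

variable {α β : Type*}

section Cycles

variable {σ τ : Perm α}

theorem SameCycle.of_apply_eq {x y : α} (h : σ x = y) : σ.SameCycle x y :=
  h ▸ sameCycle_apply_right.2 .rfl

theorem SameCycle.apply_eq_of_invariant [Finite α] {γ : Type*} {g : α → γ}
    (hg : ∀ x, g (σ x) = g x) {x y : α} (h : σ.SameCycle x y) : g x = g y := by
  obtain ⟨k, rfl⟩ := h.exists_nat_pow_eq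
  clear h
  induction k with
  | zero => rfl
  | succ k ih => rw [ih, pow_succ', mul_apply, hg]

theorem SameCycle.of_forall_step [Finite α] {v x : α} (hvx : σ.SameCycle v x)
    (hstep : ∀ z, σ.SameCycle v z → σ z ≠ v → τ.SameCycle z (σ z)) : τ.SameCycle v x := by
  have hex : ∃ k, (σ ^ k) v = x := hvx.exists_nat_pow_eq
  obtain ⟨hk, hmin⟩ : (σ ^ Nat.find hex) v = x ∧ ∀ m < Nat.find hex, (σ ^ m) v ≠ x :=
    ⟨Nat.find_spec hex, fun m => Nat.find_min hex⟩
  generalize Nat.find hex = k at hk hmin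
  subst hk
  suffices ∀ i ≤ k, τ.SameCycle v ((σ ^ i) v) from this k le_rfl
  intro i
  induction i with
  | zero => exact fun _ => .rfl
  | succ i ih =>
    intro hi
    -- a return to `v` before step `k` would give a shorter path to `(σ ^ k) v`
    have hret : (σ ^ (i + 1)) v ≠ v := fun h ↦ by
      refine hmin (k - (i + 1)) (by omega) ?_
      conv_rhs => rw [← Nat.sub_add_cancel hi, pow_add, mul_apply, h]
    rw [pow_succ', mul_apply] at hret ⊢
    exact (ih (by omega)).trans (hstep _ (sameCycle_pow_right.2 .rfl) hret)

end Cycles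

section CycleMin

variable [Fintype α] [LinearOrder β] (σ : Perm α) (f : α → β)

noncomputable def cycleMin (x : α) : β :=
  (Finset.univ.filter (σ.SameCycle x)).inf' ⟨x, Finset.mem_filter.2 ⟨Finset.mem_univ x, .rfl⟩⟩ f

variable {σ f}

theorem cycleMin_le {x y : α} (h : σ.SameCycle x y) : σ.cycleMin f x ≤ f y :=
  Finset.inf'_le f (Finset.mem_filter.2 ⟨Finset.mem_univ y, h⟩)

theorem exists_sameCycle_cycleMin_eq (x : α) : ∃ y, σ.SameCycle x y ∧ σ.cycleMin f x = f y := by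
  obtain ⟨y, hy, h⟩ := Finset.exists_mem_eq_inf' _ f
  exact ⟨y, (Finset.mem_filter.1 hy).2, h⟩

theorem SameCycle.cycleMin_eq {x y : α} (h : σ.SameCycle x y) :
    σ.cycleMin f x = σ.cycleMin f y := by
  obtain ⟨x', hx', hx⟩ := exists_sameCycle_cycleMin_eq (f := f) x
  obtain ⟨y', hy', hy⟩ := exists_sameCycle_cycleMin_eq (f := f) y
  exact le_antisymm (hy ▸ cycleMin_le (h.trans hy')) (hx ▸ cycleMin_le (h.symm.trans hx'))

end CycleMin

section Joining

variable {κ : α → α} (hκ : Involutive κ) (V : Set α)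

noncomputable def pairSwap : Perm α :=
  Involutive.toPerm (fun y => if y ∈ V ∨ κ y ∈ V then κ y else y) fun y => by
    by_cases hy : y ∈ V ∨ κ y ∈ V
    · have hκy : κ y ∈ V ∨ κ (κ y) ∈ V := by rw [hκ y]; exact hy.symm
      dsimp only
      rw [if_pos hy, if_pos hκy, hκ y]
    · simp only [if_neg hy]

theorem pairSwap_apply (y : α) :
    pairSwap hκ V y = if y ∈ V ∨ κ y ∈ V then κ y else y := rfl

variable [Finite α] {σ : Perm α} [Preorder β] {ν : α → β}

theorem sameCycle_pairSwap_mul_apply [WellFoundedGT β] (hν : ∀ x y, σ.SameCycle x y → ν x = ν y)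
    (hdesc : ∀ v ∈ V, ν (κ v) < ν v) (huniq : ∀ v ∈ V, ∀ w ∈ V, σ.SameCycle v w → v = w)
    (x : α) (hx : σ x ∉ V) :
    (pairSwap hκ V * σ).SameCycle x (σ x) := by
  induction x using (InvImage.wf ν wellFounded_gt).induction with
  | _ x ih =>
    by_cases hκx : κ (σ x) ∈ V
    -- from `x` the joined map detours once around the cycle of `κ (σ x)`, whose `ν` is larger
    · set v := κ (σ x)
      have hτx : (pairSwap hκ V * σ) x = v := by
        rw [mul_apply, pairSwap_apply, if_pos (Or.inr hκx)]
      have hτv : (pairSwap hκ V * σ) (σ.symm v) = σ x := by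
        rw [mul_apply, apply_symm_apply, pairSwap_apply, if_pos (Or.inl hκx), hκ]
      have hwalk : (pairSwap hκ V * σ).SameCycle v (σ.symm v) := by
        refine SameCycle.of_forall_step (sameCycle_symm_apply_right.2 .rfl) fun z hz hzv => ?_
        refine ih z ?_ fun hzV => hzv (huniq _ hzV _ hκx (sameCycle_apply_left.2 hz.symm))
        show ν x < ν z
        rw [hν x (σ x) (sameCycle_apply_right.2 .rfl), ← hκ (σ x), ← hν v z hz]
        exact hdesc v hκx
      exact (SameCycle.of_apply_eq hτx).trans (hwalk.trans (SameCycle.of_apply_eq hτv))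
    · refine SameCycle.of_apply_eq ?_
      rw [mul_apply, pairSwap_apply, if_neg (not_or.2 ⟨hx, hκx⟩)]

theorem sameCycle_pairSwap_mul [WellFoundedLT β] [WellFoundedGT β]
    (hν : ∀ x y, σ.SameCycle x y → ν x = ν y) (hdesc : ∀ v ∈ V, ν (κ v) < ν v)
    (huniq : ∀ v ∈ V, ∀ w ∈ V, σ.SameCycle v w → v = w) (r : α)
    (hr : ∀ v ∈ V, ¬ σ.SameCycle r v) (hcover : ∀ x, σ.SameCycle r x ∨ ∃ v ∈ V, σ.SameCycle v x)
    (x y : α) : (pairSwap hκ V * σ).SameCycle x y := by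
  have hstep := sameCycle_pairSwap_mul_apply hκ V hν hdesc huniq
  suffices hroot : ∀ x, (pairSwap hκ V * σ).SameCycle r x from (hroot x).symm.trans (hroot y)
  intro x
  induction x using (InvImage.wf ν wellFounded_lt).induction with
  | _ x ih =>
    rcases hcover x with hrx | ⟨v, hv, hvx⟩
    · exact hrx.of_forall_step fun z hz _ =>
        hstep z fun hzV => hr _ hzV (hz.trans (SameCycle.of_apply_eq rfl))
    · -- enter the cycle of `v` from the lower cycle through `σ⁻¹ (κ v)`
      have hb : (pairSwap hκ V * σ) (σ.symm (κ v)) = v := by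
        rw [mul_apply, apply_symm_apply, pairSwap_apply, if_pos (Or.inr (by rwa [hκ])), hκ]
      have hlt : ν (σ.symm (κ v)) < ν x := by
        rw [hν _ _ (SameCycle.of_apply_eq (apply_symm_apply σ (κ v))), ← hν v x hvx]
        exact hdesc v hv
      refine (ih _ hlt).trans ((SameCycle.of_apply_eq hb).trans (hvx.of_forall_step ?_))
      exact fun z hz hzv =>
        hstep z fun hzV => hzv (huniq _ hzV _ hv (sameCycle_apply_left.2 hz.symm))

end Joining

end Equiv.Perm

theorem inOrbit_iff_sameCycle {α : Type*} [Finite α] {σ : Perm α} {x y : α} :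
    inOrbit σ x y ↔ σ.SameCycle x y := by
  simp only [inOrbit, ← Perm.coe_pow]
  exact ⟨fun ⟨k, hk⟩ => hk ▸ Perm.sameCycle_pow_right.2 .rfl, Perm.SameCycle.exists_nat_pow_eq⟩

section Registers

variable {n : ℕ}

theorem get_of_lt (c : Fin n → F2) {j : ℕ} (hj : j < n) : get c j = c ⟨j, hj⟩ := dif_pos hj

theorem get_val (c : Fin n → F2) (i : Fin n) : get c i = c i := dif_pos i.isLt

theorem ext_get {c d : Fin n → F2} (h : ∀ j < n, get c j = get d j) : c = d :=
  funext fun i => by simpa only [get_val] using h i i.isLt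

theorem get_shiftIn_of_lt (c : Fin n → F2) (b : F2) {j : ℕ} (hj : j + 1 < n) :
    get (shiftIn c b) j = get c (j + 1) := by
  simp [get.eq_def, shiftIn, hj, show j < n by omega]

theorem get_shiftIn_last (c : Fin n → F2) (b : F2) (hn : 0 < n) :
    get (shiftIn c b) (n - 1) = b := by
  simp [get.eq_def, shiftIn, show n - 1 < n by omega, show ¬ n - 1 + 1 < n by omega]

theorem nextMap_eq_shiftIn (ρ : (Fin n → F2) → F2) (c : Fin n → F2) :
    nextMap ρ c = shiftIn c (ρ c) := rfl

theorem get_compSt_of_lt (v : Fin n → F2) {j : ℕ} (hj : j + 1 < n) :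
    get (compSt v) j = get v j := by
  simp [get.eq_def, compSt, show j < n by omega, show j + 1 ≠ n by omega]

theorem get_compSt_last (v : Fin n → F2) (hn : 0 < n) :
    get (compSt v) (n - 1) = get v (n - 1) + 1 := by
  simp [get.eq_def, compSt, show n - 1 < n by omega, show n - 1 + 1 = n by omega]

theorem compSt_involutive : Involutive (compSt (n := n)) := fun v => by
  funext i
  by_cases hi : (i : ℕ) + 1 = n
  · simp [compSt, hi, add_assoc, show (1 : F2) + 1 = 0 by decide]
  · simp [compSt, hi]

theorem compSt_shiftIn (c : Fin n → F2) (b : F2) : compSt (shiftIn c b) = shiftIn c (b + 1) := by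
  funext i
  by_cases hi : (i : ℕ) + 1 = n
  · simp [compSt, shiftIn, hi]
  · simp [compSt, shiftIn, hi, show (i : ℕ) + 1 < n by omega]

theorem get_iterate_nextMap (ρ : (Fin n → F2) → F2) (c : Fin n → F2) {i j : ℕ} (h : i + j < n) :
    get ((nextMap ρ)^[i] c) j = get c (i + j) := by
  induction i generalizing c with
  | zero => simp
  | succ i ih =>
    rw [iterate_succ_apply, ih _ (by omega), nextMap_eq_shiftIn, get_shiftIn_of_lt _ _ (by omega)]
    ring_nf

end Registers

section Lex

variable {n : ℕ}

-- `ZMod 2` carries no order, so the bits are read in `Fin 2`.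
def lexKey (c : Fin n → F2) : Lex (Fin n → Fin 2) :=
  toLex fun i => ⟨(c i).val, (c i).val_lt⟩

theorem lexKey_injective : Injective (lexKey (n := n)) := fun _ _ h =>
  funext fun i => ZMod.val_injective 2 (congrArg Fin.val (congrFun (toLex.injective h) i))

theorem lexLe_iff_lexKey_le {v w : Fin n → F2} : lexLe v w ↔ lexKey v ≤ lexKey w := by
  rw [← not_lt]
  change _ ↔ ¬ ∃ j, (∀ i, i < j → lexKey w i = lexKey v i) ∧ lexKey w j < lexKey v j
  simp only [lexLe, lexKey, Pi.toLex_apply, Fin.mk.injEq, Fin.mk_lt_mk,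
    (ZMod.val_injective 2).eq_iff, not_exists, not_and, not_lt]
  exact forall_congr' fun j => imp_congr_left (forall₂_congr fun i _ => eq_comm)

theorem lexKey_lt_of_get {c d : Fin n → F2} {j : ℕ} (hj : j < n)
    (heq : ∀ l < j, get c l = get d l) (hc : get c j = 0) (hd : get d j = 1) :
    lexKey c < lexKey d := by
  refine ⟨⟨j, hj⟩, fun l hl => ?_, ?_⟩
  · have := heq l hl
    rw [get_val, get_val] at this
    simp only [lexKey, Pi.toLex_apply, this]
  · rw [get_of_lt _ hj] at hc hd
    simp only [lexKey, Pi.toLex_apply, hc, hd, Fin.mk_lt_mk]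
    decide

theorem lexKey_iterate_compSt_lt (ρ : (Fin n → F2) → F2) {v : Fin n → F2} (hv : get v (n - 1) = 1)
    {i : ℕ} (hi : i < n) : lexKey ((nextMap ρ)^[i] (compSt v)) < lexKey ((nextMap ρ)^[i] v) := by
  have hlast : i + (n - 1 - i) = n - 1 := by omega
  refine lexKey_lt_of_get (j := n - 1 - i) (by omega) (fun l hl => ?_) ?_ ?_
  · rw [get_iterate_nextMap _ _ (by omega), get_iterate_nextMap _ _ (by omega),
      get_compSt_of_lt _ (by omega)]
  · rw [get_iterate_nextMap _ _ (by omega), hlast, get_compSt_last _ (by omega), hv]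
    decide
  · rw [get_iterate_nextMap _ _ (by omega), hlast, hv]

end Lex

section PRR

variable {n : ℕ}

theorem nextMap_fPRR_injective (hn : 2 ≤ n) : Injective (nextMap (fPRR (n := n))) := by
  intro c d h
  have htail : ∀ j, 0 < j → j < n → get c j = get d j := fun j hj0 hjn => by
    have := congrArg (get · (j - 1)) h
    simpa only [nextMap_eq_shiftIn, get_shiftIn_of_lt _ _ (show j - 1 + 1 < n by omega),
      Nat.sub_add_cancel hj0] using this
  have hf : fPRR c = fPRR d := by
    simpa only [nextMap_eq_shiftIn, get_shiftIn_last _ _ (show 0 < n by omega)]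
      using congrArg (get · (n - 1)) h
  refine ext_get fun j hj => ?_
  rcases Nat.eq_zero_or_pos j with rfl | hj0
  · rw [fPRR, fPRR, htail 1 one_pos (by omega), htail (n - 1) (by omega) (by omega)] at hf
    exact add_right_cancel (add_right_cancel hf)
  · exact htail j hj0 hj

noncomputable def prr (hn : 2 ≤ n) : Perm (Fin n → F2) :=
  Equiv.ofBijective _ (nextMap_fPRR_injective hn).bijective_of_finite

variable (hn : 2 ≤ n)

theorem coe_prr : ⇑(prr hn) = nextMap fPRR := rfl

theorem get_prr_pow (c : Fin n → F2) {i j : ℕ} (h : i + j < n) :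
    get ((prr hn ^ i) c) j = get c (i + j) := by
  rw [Perm.coe_pow, coe_prr]
  exact get_iterate_nextMap _ _ h

theorem prr_zero : prr hn 0 = 0 := by
  funext i
  simp [coe_prr, nextMap, fPRR, get.eq_def]

theorem Equiv.Perm.SameCycle.get_zero_add_get_last {hn : 2 ≤ n} {c d : Fin n → F2}
    (h : (prr hn).SameCycle c d) : get c 0 + get c (n - 1) = get d 0 + get d (n - 1) := by
  refine h.apply_eq_of_invariant (g := fun c => get c 0 + get c (n - 1)) fun c => ?_
  rw [coe_prr, nextMap_eq_shiftIn, get_shiftIn_of_lt _ _ (by omega),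
    get_shiftIn_last _ _ (by omega), fPRR, zero_add]
  linear_combination get c 1 * CharTwo.two_eq_zero (R := F2)

theorem Equiv.Perm.SameCycle.get_zero_eq_get_last_iff {hn : 2 ≤ n} {c d : Fin n → F2}
    (h : (prr hn).SameCycle c d) : get c 0 = get c (n - 1) ↔ get d 0 = get d (n - 1) := by
  rw [← CharTwo.add_eq_zero (a := get c 0), ← CharTwo.add_eq_zero (a := get d 0),
    h.get_zero_add_get_last]

theorem prr_pow_pred_apply {v : Fin n → F2} (hv : get v 0 = get v (n - 1)) :
    (prr hn ^ (n - 1)) v = v := by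
  refine ext_get fun j hj => ?_
  have hvj : get ((prr hn ^ j) v) 0 = get ((prr hn ^ j) v) (n - 1) :=
    (Perm.sameCycle_pow_right.2 .rfl).get_zero_eq_get_last_iff.1 hv
  calc get ((prr hn ^ (n - 1)) v) j
      = get ((prr hn ^ j) ((prr hn ^ (n - 1)) v)) 0 := (get_prr_pow hn _ (j := 0) hj).symm
    _ = get ((prr hn ^ (n - 1)) ((prr hn ^ j) v)) 0 := by
        rw [← Perm.mul_apply, ← Perm.mul_apply, ← pow_add, ← pow_add, add_comm]
    _ = get ((prr hn ^ j) v) 0 := by rw [get_prr_pow hn _ (j := 0) (by omega), add_zero, hvj]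
    _ = get v j := get_prr_pow hn _ (j := 0) hj

theorem exists_lt_pow_apply_eq {v w : Fin n → F2} (hv : get v 0 = get v (n - 1))
    (hvw : (prr hn).SameCycle v w) : ∃ i < n - 1, (prr hn ^ i) v = w := by
  obtain ⟨k, rfl⟩ := hvw.exists_nat_pow_eq
  refine ⟨k % (n - 1), Nat.mod_lt _ (by omega), ?_⟩
  conv_rhs => rw [← Nat.mod_add_div k (n - 1), pow_add, Perm.mul_apply, pow_mul,
    Perm.pow_apply_eq_self_of_apply_eq_self (prr_pow_pred_apply hn hv)]

end PRR

section JoinStates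

variable {n : ℕ} (sel : (Fin n → F2) → (Fin n → F2))

/-- The paper's set `A` is `{c | shiftIn c 1 ∈ joinStates sel}`. -/
def joinStates : Set (Fin n → F2) :=
  {v | get v (n - 1) = 1 ∧
    ((get v 0 = 0 ∧ isCycleRep (nextMap fPRR) v) ∨ (get v 0 = 1 ∧ v = sel v))}

variable {sel} (hn : 2 ≤ n)

theorem isCycleRep_iff_lexKey_le {v : Fin n → F2} :
    isCycleRep (nextMap fPRR) v ↔ ∀ w, (prr hn).SameCycle v w → lexKey v ≤ lexKey w := by
  simp only [isCycleRep, orbit, Set.mem_ofPred_eq, ← coe_prr hn, inOrbit_iff_sameCycle,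
    lexLe_iff_lexKey_le]

theorem exists_lt_cycleMin_eq {v : Fin n → F2} (hv : v ∈ joinStates sel) :
    ∃ i < n, (prr hn).cycleMin lexKey v = lexKey ((prr hn ^ i) v) := by
  obtain ⟨w, hw, hmin⟩ := (prr hn).exists_sameCycle_cycleMin_eq (f := lexKey) v
  obtain ⟨hlast, ⟨-, hrep⟩ | ⟨hhead, -⟩⟩ := hv
  · refine ⟨0, by omega, le_antisymm (Perm.cycleMin_le .rfl) ?_⟩
    exact hmin ▸ (isCycleRep_iff_lexKey_le hn).1 hrep w hw
  · obtain ⟨i, hi, rfl⟩ := exists_lt_pow_apply_eq hn (hhead.trans hlast.symm) hw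
    exact ⟨i, by omega, hmin⟩

theorem cycleMin_compSt_lt {v : Fin n → F2} (hv : v ∈ joinStates sel) :
    (prr hn).cycleMin lexKey (compSt v) < (prr hn).cycleMin lexKey v := by
  obtain ⟨i, hi, hmin⟩ := exists_lt_cycleMin_eq hn hv
  calc (prr hn).cycleMin lexKey (compSt v) ≤ lexKey ((prr hn ^ i) (compSt v)) :=
        Perm.cycleMin_le (Perm.sameCycle_pow_right.2 .rfl)
    _ < lexKey ((prr hn ^ i) v) := by
        rw [Perm.coe_pow, coe_prr]
        exact lexKey_iterate_compSt_lt _ hv.1 hi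
    _ = (prr hn).cycleMin lexKey v := hmin.symm

theorem eq_of_mem_joinStates (hconst : ∀ v w, (prr hn).SameCycle v w → sel v = sel w)
    {v w : Fin n → F2} (hv : v ∈ joinStates sel) (hw : w ∈ joinStates sel)
    (hvw : (prr hn).SameCycle v w) : v = w := by
  have hhead : get v 0 = get w 0 := by
    simpa [hv.1, hw.1] using hvw.get_zero_add_get_last
  obtain ⟨-, ⟨hv0, hvrep⟩ | ⟨hv0, hvsel⟩⟩ := hv <;> obtain ⟨-, ⟨hw0, hwrep⟩ | ⟨hw0, hwsel⟩⟩ := hw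
  · exact lexKey_injective (le_antisymm ((isCycleRep_iff_lexKey_le hn).1 hvrep w hvw)
      ((isCycleRep_iff_lexKey_le hn).1 hwrep v hvw.symm))
  · exact absurd (hv0 ▸ hw0 ▸ hhead) (by decide)
  · exact absurd (hv0 ▸ hw0 ▸ hhead) (by decide)
  · rw [hvsel, hwsel, hconst v w hvw]

theorem not_sameCycle_zero_of_mem_joinStates {v : Fin n → F2} (hv : v ∈ joinStates sel) :
    ¬ (prr hn).SameCycle 0 v := by
  intro h
  have := hv.1
  rw [← h.eq_of_left (prr_zero hn)] at this
  simp [get.eq_def] at this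

end JoinStates

section Cover

variable {n : ℕ} {sel : (Fin n → F2) → (Fin n → F2)} (hn : 2 ≤ n)

theorem exists_mem_joinStates_of_get_ne {x : Fin n → F2} (hx : get x 0 ≠ get x (n - 1)) :
    ∃ m ∈ joinStates sel, (prr hn).SameCycle m x := by
  obtain ⟨m, hm, hmin⟩ := (prr hn).exists_sameCycle_cycleMin_eq (f := lexKey) x
  obtain ⟨u, hu, hu0⟩ : ∃ u, (prr hn).SameCycle x u ∧ get u 0 = 0 := by
    by_contra! h
    have hone : ∀ j < n, get x j = 1 := fun j hj => by
      have := h _ (Perm.sameCycle_pow_right.2 .rfl : (prr hn).SameCycle x ((prr hn ^ j) x))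
      exact F2.eq_one_of_ne_zero (get_prr_pow hn x (j := 0) hj ▸ this)
    exact hx ((hone 0 (by omega)).trans (hone (n - 1) (by omega)).symm)
  have hm0 : get m 0 = 0 := by
    by_contra hm0
    refine (hmin ▸ Perm.cycleMin_le hu).not_gt (lexKey_lt_of_get (j := 0) (by omega) ?_ hu0
      (F2.eq_one_of_ne_zero hm0))
    exact fun l hl => absurd hl (Nat.not_lt_zero l)
  refine ⟨m, ⟨?_, Or.inl ⟨hm0, (isCycleRep_iff_lexKey_le hn).2 fun w hw =>
    hmin ▸ Perm.cycleMin_le (hm.trans hw)⟩⟩, hm.symm⟩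
  have := hm.get_zero_add_get_last
  rw [F2.add_eq_one_of_ne hx, hm0, zero_add] at this
  exact this.symm

theorem exists_mem_joinStates_sameCycle (hmem : ∀ v, (prr hn).SameCycle v (sel v))
    (hconst : ∀ v w, (prr hn).SameCycle v w → sel v = sel w)
    (hval : ∀ v : Fin n → F2, v ≠ 0 → (∀ w, (prr hn).SameCycle v w → get w 0 = get w (n - 1)) →
      get (sel v) 0 = 1 ∧ get (sel v) (n - 1) = 1)
    {x : Fin n → F2} (hx : x ≠ 0) : ∃ v ∈ joinStates sel, (prr hn).SameCycle v x := by
  by_cases hpcr : get x 0 = get x (n - 1)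
  · obtain ⟨h0, hlast⟩ := hval x hx fun w hw => hw.get_zero_eq_get_last_iff.1 hpcr
    exact ⟨sel x, ⟨hlast, Or.inr ⟨h0, hconst _ _ (hmem x)⟩⟩, (hmem x).symm⟩
  · exact exists_mem_joinStates_of_get_ne hn hpcr

end Cover

theorem nextMap_rule_eq {n : ℕ} (hn : 2 ≤ n) (sel : (Fin n → F2) → (Fin n → F2)) :
    nextMap (fun c : Fin n → F2 =>
      if (get c 1 = 0 ∧ isCycleRep (nextMap (n := n) fPRR) (shiftIn c 1)) ∨
         (get c 1 = 1 ∧ shiftIn c 1 = sel (shiftIn c 1))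
      then fPRR c + 1 else fPRR c) =
      ⇑(Perm.pairSwap compSt_involutive (joinStates sel) * prr hn) := by
  funext c
  have hA : ((get c 1 = 0 ∧ isCycleRep (nextMap (n := n) fPRR) (shiftIn c 1)) ∨
      (get c 1 = 1 ∧ shiftIn c 1 = sel (shiftIn c 1))) ↔ shiftIn c 1 ∈ joinStates sel := by
    simp only [joinStates, Set.mem_ofPred_eq, get_shiftIn_of_lt c 1 (show 0 + 1 < n by omega),
      get_shiftIn_last c 1 (show 0 < n by omega), true_and]
  have h0 : shiftIn c 0 ∉ joinStates sel := fun h => by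
    simpa [get_shiftIn_last c 0 (show 0 < n by omega)] using h.1
  rw [Perm.mul_apply, coe_prr, Perm.pairSwap_apply, nextMap_eq_shiftIn, nextMap_eq_shiftIn _ c,
    compSt_shiftIn]
  generalize fPRR c = b
  have hV : (shiftIn c b ∈ joinStates sel ∨ shiftIn c (b + 1) ∈ joinStates sel) ↔
      shiftIn c 1 ∈ joinStates sel := by
    rcases (by decide : ∀ b : F2, b = 0 ∨ b = 1) b with rfl | rfl
    · simp [h0]
    · simp [h0, show (1 : F2) + 1 = 0 by decide]
  simp only [hV, ← hA, apply_ite (shiftIn c)]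

/-- the generic successor rule `Ψ` (Theorem 3.1). Every nonzero PCR-type cycle
contains a state starting and ending in `1`; for every choice `sel` of such states
(one per cycle) the rule generates a de Bruijn sequence. -/
theorem generic_rule_Psi (n : ℕ) (hn : 3 ≤ n)
    (sel : (Fin n → F2) → (Fin n → F2))
    (hmem : ∀ v, sel v ∈ orbit (nextMap (n := n) fPRR) v)
    (hconst : ∀ v w, inOrbit (nextMap (n := n) fPRR) v w → sel v = sel w)
    (hval : ∀ v : Fin n → F2, v ≠ 0 →
      (∀ w ∈ orbit (nextMap (n := n) fPRR) v, get w 0 = get w (n - 1)) →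
      get (sel v) 0 = 1 ∧ get (sel v) (n - 1) = 1) :
    (∀ v : Fin n → F2, v ≠ 0 →
      (∀ w ∈ orbit (nextMap (n := n) fPRR) v, get w 0 = get w (n - 1)) →
      ∃ w ∈ orbit (nextMap (n := n) fPRR) v, get w 0 = 1 ∧ get w (n - 1) = 1) ∧
    generatesDB (fun c : Fin n → F2 =>
      if (get c 1 = 0 ∧ isCycleRep (nextMap (n := n) fPRR) (shiftIn c 1)) ∨
         (get c 1 = 1 ∧ shiftIn c 1 = sel (shiftIn c 1))
      then fPRR c + 1 else fPRR c) := by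
  refine ⟨fun v hv hpcr => ⟨sel v, hmem v, hval v hv hpcr⟩, fun x y => ?_⟩
  have h2 : 2 ≤ n := by omega
  simp only [orbit, Set.mem_ofPred_eq, ← coe_prr h2, inOrbit_iff_sameCycle] at hmem hconst hval
  rw [nextMap_rule_eq h2 sel]
  refine inOrbit_iff_sameCycle.2 <| Perm.sameCycle_pairSwap_mul compSt_involutive _
    (fun _ _ h => h.cycleMin_eq) (fun _ hv => cycleMin_compSt_lt h2 hv)
    (fun _ hv _ hw => eq_of_mem_joinStates h2 hconst hv hw) 0
    (fun _ hv => not_sameCycle_zero_of_mem_joinStates h2 hv)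
    (fun x => ?_) x y
  by_cases hx : x = 0
  · exact .inl (hx ▸ .rfl)
  · exact .inr (exists_mem_joinStates_sameCycle h2 hmem hconst hval hx)
end
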